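/- arXiv:1910.03919 — 2 statements merged into one kernel-verified Lean document; each statement's English description precedes it below -/
import Mathlib

section
/- Let n and d be positive integers, let G be a game graph with n nodes and priorities up to d, and let A be an SFPG separator with input alphabet Σ_{n,d}. Then Even has a winning strategy in G if and only if Even has a winning strategy in the synchronized product G×A. -/
namespace PGSep

/-- Letters of the alphabet `Σ_{n,d}`: triples (source node, priority, target node). -/
abbrev Letter : Type := ℕ × ℕ × ℕ

/-- The priority component of a letter. -/
def prio (e : Letter) : ℕ := e.2.1

/-- Membership in the alphabet `Σ_{n,d} = {1,…,n} × {1,…,d} × {1,…,n}`. -/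
def InAlph (n d : ℕ) (e : Letter) : Prop :=
  1 ≤ e.1 ∧ e.1 ≤ n ∧ 1 ≤ e.2.1 ∧ e.2.1 ≤ d ∧ 1 ≤ e.2.2 ∧ e.2.2 ≤ n

/-- Infinite words over the alphabet. -/
abbrev Word : Type := ℕ → Letter

/-- `p` occurs infinitely often among the values of `f`. -/
def InfOft (f : ℕ → ℕ) (p : ℕ) : Prop := ∀ N, ∃ k, N ≤ k ∧ f k = p

/-- The largest value occurring infinitely often in `f` exists and is even. -/
def MaxInfOftEven (f : ℕ → ℕ) : Prop :=
  ∃ p, Even p ∧ InfOft f p ∧ ∀ q, InfOft f q → q ≤ p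

/-- The largest value occurring infinitely often in `f` exists and is odd. -/
def MaxInfOftOdd (f : ℕ → ℕ) : Prop :=
  ∃ p, Odd p ∧ InfOft f p ∧ ∀ q, InfOft f q → q ≤ p

/-- `LimsupEven_{n,d}`: the largest priority occurring infinitely often is even. -/
def LimsupEven (w : Word) : Prop := MaxInfOftEven fun k => prio (w k)

/-- `LimsupOdd_{n,d}`: the largest priority occurring infinitely often is odd. -/
def LimsupOdd (w : Word) : Prop := MaxInfOftOdd fun k => prio (w k)

/-- An infinite sequence of triples is a path in the edge set `E`. -/
def IsPathSeq {V : Type*} (E : Set (V × ℕ × V)) (w : ℕ → V × ℕ × V) : Prop :=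
  ∀ k, w k ∈ E ∧ (w k).2.2 = (w (k + 1)).1

/-- A game graph with `n` nodes (the set {1,…,n}) and priorities up to `d`. -/
structure GameGraph (n d : ℕ) where
  /-- nodes owned by Even (V_□) -/
  evenN : Set ℕ
  /-- nodes owned by Odd (V_△) -/
  oddN : Set ℕ
  /-- the starting node -/
  start : ℕ
  /-- the set of edges (a subset of the alphabet) -/
  edges : Set Letter
  union_eq : evenN ∪ oddN = Set.Icc 1 n
  disj : Disjoint evenN oddN
  start_mem : start ∈ Set.Icc 1 n
  edges_alph : ∀ e ∈ edges, InAlph n d e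
  total : ∀ v ∈ Set.Icc (1 : ℕ) n, ∃ e ∈ edges, e.1 = v

/-- A play in a game graph: an infinite path starting at the starting node,
identified with the word listing its consecutive edges. -/
def IsPlay {n d : ℕ} (G : GameGraph n d) (w : Word) : Prop :=
  (w 0).1 = G.start ∧ IsPathSeq G.edges w

/-- A positional strategy for Even: one outgoing edge for each node of `V_□`. -/
structure EPosStrat {n d : ℕ} (G : GameGraph n d) where
  choice : ℕ → Letter
  mem : ∀ v ∈ G.evenN, choice v ∈ G.edges ∧ (choice v).1 = v

/-- A positional strategy for Odd: one outgoing edge for each node of `V_△`. -/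
structure OPosStrat {n d : ℕ} (G : GameGraph n d) where
  choice : ℕ → Letter
  mem : ∀ v ∈ G.oddN, choice v ∈ G.edges ∧ (choice v).1 = v

/-- A play arises from a positional strategy of Even. -/
def ArisesE {n d : ℕ} {G : GameGraph n d} (τ : EPosStrat G) (w : Word) : Prop :=
  IsPlay G w ∧ ∀ k, (w k).1 ∈ G.evenN → w k = τ.choice (w k).1

/-- A play arises from a positional strategy of Odd. -/
def ArisesO {n d : ℕ} {G : GameGraph n d} (τ : OPosStrat G) (w : Word) : Prop :=
  IsPlay G w ∧ ∀ k, (w k).1 ∈ G.oddN → w k = τ.choice (w k).1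

/-- A positional strategy for Even is winning: every arising play is won by Even. -/
def EWinningPos {n d : ℕ} {G : GameGraph n d} (τ : EPosStrat G) : Prop :=
  ∀ w, ArisesE τ w → LimsupEven w

/-- A positional strategy for Odd is winning: every arising play is won by Odd
(i.e. not won by Even). -/
def OWinningPos {n d : ℕ} {G : GameGraph n d} (τ : OPosStrat G) : Prop :=
  ∀ w, ArisesO τ w → ¬ LimsupEven w

/-- `PosEven_{n,d}`: plays arising from positional winning strategies for Even. -/
def PosEven (n d : ℕ) : Set Word :=
  {w | ∃ G : GameGraph n d, ∃ τ : EPosStrat G, EWinningPos τ ∧ ArisesE τ w}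

/-- `PosOdd_{n,d}`: plays arising from positional winning strategies for Odd. -/
def PosOdd (n d : ℕ) : Set Word :=
  {w | ∃ G : GameGraph n d, ∃ τ : OPosStrat G, OWinningPos τ ∧ ArisesO τ w}

/-- A nondeterministic automaton reading letters, with state space `Q`. -/
structure Automaton (Q : Type*) where
  init : Q
  trans : Set (Q × Letter × ℕ × Q)

/-- Transitions: (source state, letter, emitted priority, target state). -/
abbrev Trans (Q : Type*) : Type _ := Q × Letter × ℕ × Q

def tSrc {Q : Type*} (t : Trans Q) : Q := t.1
def tLetter {Q : Type*} (t : Trans Q) : Letter := t.2.1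
def tPrio {Q : Type*} (t : Trans Q) : ℕ := t.2.2.1
def tTgt {Q : Type*} (t : Trans Q) : Q := t.2.2.2

/-- `A` is a (total) nondeterministic parity automaton over `Σ_{n,d}` with
transition priorities in `{1,…,d'}`. -/
def IsParityAutomaton (n d d' : ℕ) {Q : Type*} (A : Automaton Q) : Prop :=
  (∀ t ∈ A.trans, InAlph n d (tLetter t) ∧ 1 ≤ tPrio t ∧ tPrio t ≤ d') ∧
  (∀ (s : Q) (e : Letter), InAlph n d e → ∃ p s', (s, e, p, s') ∈ A.trans)

/-- A run of the automaton: an infinite path of transitions starting at `init`. -/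
def IsRun {Q : Type*} (A : Automaton Q) (ρ : ℕ → Trans Q) : Prop :=
  tSrc (ρ 0) = A.init ∧ ∀ k, ρ k ∈ A.trans ∧ tTgt (ρ k) = tSrc (ρ (k + 1))

/-- The run `ρ` reads the word `w`. -/
def Reads {Q : Type*} (ρ : ℕ → Trans Q) (w : Word) : Prop := ∀ k, tLetter (ρ k) = w k

/-- A run is accepting: the largest priority labelling infinitely many
of its transitions is even. -/
def Accepting {Q : Type*} (ρ : ℕ → Trans Q) : Prop := MaxInfOftEven fun k => tPrio (ρ k)

/-- The language of the automaton. -/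
def Lang {Q : Type*} (A : Automaton Q) : Set Word :=
  {w | ∃ ρ, IsRun A ρ ∧ Reads ρ w ∧ Accepting ρ}

/-- A transition strategy for `A`, resolving nondeterminism based on the word read
so far, the current state, and the next letter. -/
structure TransStrat (n d : ℕ) {Q : Type*} (A : Automaton Q) where
  app : List Letter → Q → Letter → Trans Q
  valid : ∀ w s e, InAlph n d e →
    app w s e ∈ A.trans ∧ tSrc (app w s e) = s ∧ tLetter (app w s e) = e

/-- The state reached after reading the first `k` letters of `w` following `σ`. -/
def stateAt {n d : ℕ} {Q : Type*} (A : Automaton Q) (σ : TransStrat n d A) (w : Word) :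
    ℕ → Q
  | 0 => A.init
  | k + 1 => tTgt (σ.app ((List.range k).map w) (stateAt A σ w k) (w k))

/-- The run obtained by following the transition strategy `σ` while reading `w`. -/
def followRun {n d : ℕ} {Q : Type*} (A : Automaton Q) (σ : TransStrat n d A) (w : Word)
    (k : ℕ) : Trans Q :=
  σ.app ((List.range k).map w) (stateAt A σ w k) (w k)

/-- The transition strategy `σ` is winning for the set of words `L`. -/
def WinningFor {n d : ℕ} {Q : Type*} (A : Automaton Q) (σ : TransStrat n d A)
    (L : Set Word) : Prop :=
  ∀ w ∈ L, Accepting (followRun A σ w)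

/-- `A` is good for games: some transition strategy is winning for the whole `L(A)`. -/
def GFG (n d : ℕ) {Q : Type*} (A : Automaton Q) : Prop :=
  ∃ σ : TransStrat n d A, WinningFor A σ (Lang A)

/-- `A` is a parity-games separator. -/
def PGSeparator (n d : ℕ) {Q : Type*} (A : Automaton Q) : Prop :=
  (∀ w ∈ PosEven n d, w ∈ Lang A) ∧ ∀ w ∈ PosOdd n d, w ∉ Lang A

/-- `A` is a strong PG separator: additionally it rejects all of `LimsupOdd`. -/
def StrongPGSeparator (n d : ℕ) {Q : Type*} (A : Automaton Q) : Prop :=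
  PGSeparator n d A ∧ ∀ w : Word, LimsupOdd w → w ∉ Lang A

/-- `A` is suitable for parity games (SFPG). -/
def SFPG (n d : ℕ) {Q : Type*} (A : Automaton Q) : Prop :=
  PGSeparator n d A ∧
  ∀ (G : GameGraph n d) (τ : EPosStrat G), EWinningPos τ →
    ∃ σ : TransStrat n d A, WinningFor A σ {w | ArisesE τ w}

/-- A generic game with parity winning condition, over an arbitrary set of nodes. -/
structure PGame (V : Type*) where
  evenOwn : V → Prop
  start : V
  edges : Set (V × ℕ × V)

/-- A play of a generic game. -/
def PGame.IsPlay {V : Type*} (g : PGame V) (w : ℕ → V × ℕ × V) : Prop :=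
  (w 0).1 = g.start ∧ IsPathSeq g.edges w

/-- `IsFinPath E u l v`: the list of edges `l` is a finite path from `u` to `v`. -/
def IsFinPath {V : Type*} (E : Set (V × ℕ × V)) : V → List (V × ℕ × V) → V → Prop
  | u, [], v => u = v
  | u, e :: l, v => e ∈ E ∧ e.1 = u ∧ IsFinPath E e.2.2 l v

/-- Even has a winning strategy in the game `g`. -/
def EvenWins {V : Type*} (g : PGame V) : Prop :=
  ∃ str : List (V × ℕ × V) → V × ℕ × V,
    (∀ l v, IsFinPath g.edges g.start l v → g.evenOwn v →
      str l ∈ g.edges ∧ (str l).1 = v) ∧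
    ∀ w, g.IsPlay w → (∀ k, g.evenOwn ((w k).1) → w k = str ((List.range k).map w)) →
      MaxInfOftEven fun k => (w k).2.1

/-- Odd has a winning strategy in the game `g`. -/
def OddWins {V : Type*} (g : PGame V) : Prop :=
  ∃ str : List (V × ℕ × V) → V × ℕ × V,
    (∀ l v, IsFinPath g.edges g.start l v → ¬ g.evenOwn v →
      str l ∈ g.edges ∧ (str l).1 = v) ∧
    ∀ w, g.IsPlay w → (∀ k, ¬ g.evenOwn ((w k).1) → w k = str ((List.range k).map w)) →
      ¬ MaxInfOftEven fun k => (w k).2.1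

/-- Even has a strategy winning for the safety condition `safe` in the game `g`. -/
def EvenWinsSafety {V : Type*} (g : PGame V) (safe : V → Prop) : Prop :=
  ∃ str : List (V × ℕ × V) → V × ℕ × V,
    (∀ l v, IsFinPath g.edges g.start l v → g.evenOwn v →
      str l ∈ g.edges ∧ (str l).1 = v) ∧
    ∀ w, g.IsPlay w → (∀ k, g.evenOwn ((w k).1) → w k = str ((List.range k).map w)) →
      ∀ k, safe (w k).2.2

/-- A game graph viewed as a generic game. -/
def GameGraph.toPGame {n d : ℕ} (G : GameGraph n d) : PGame ℕ :=
  { evenOwn := fun v => v ∈ G.evenN, start := G.start, edges := G.edges }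

/-- The synchronized product `G × A`. -/
def prodGame {n d : ℕ} {Q : Type*} (G : GameGraph n d) (A : Automaton Q) :
    PGame ((ℕ ⊕ Letter) × Q) where
  evenOwn := fun x => match x.1 with
    | Sum.inl v => v ∈ G.evenN
    | Sum.inr _ => True
  start := (Sum.inl G.start, A.init)
  edges := {ed | (∃ e ∈ G.edges, ∃ s : Q, ed = ((Sum.inl e.1, s), 1, (Sum.inr e, s))) ∨
    (∃ t ∈ A.trans, tLetter t ∈ G.edges ∧
      ed = ((Sum.inr (tLetter t), tSrc t), tPrio t, (Sum.inl (tLetter t).2.2, tTgt t)))}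

/-- The number of registers: `rn(n) = 1 + ⌊log₂ n⌋`. -/
def rn (n : ℕ) : ℕ := 1 + Nat.log 2 n

/-- Update of a register state (bottom register first) by priority `p`:
the maximal prefix of registers smaller than `p` is replaced by `p`. -/
def update (p : ℕ) : List ℕ → List ℕ
  | [] => []
  | r :: l => if r < p then p :: update p l else r :: l

/-- The `k`-reset (registers numbered from 1, bottom first): the `k`-th register is
removed and a `1` is inserted at the bottom. -/
def resetReg (k : ℕ) (l : List ℕ) : List ℕ := 1 :: l.eraseIdx (k - 1)

/-- The value of register number `k` (registers numbered from 1, bottom first). -/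
def regVal (k : ℕ) (l : List ℕ) : ℕ := l.getD (k - 1) 0

/-- Lehtinen's register automaton `R_{n,d}`. -/
def Raut (n d : ℕ) : Automaton (List ℕ) where
  init := List.replicate (rn n) 1
  trans := {t | ∃ s e, InAlph n d e ∧
    (t = (s, e, 1, update (prio e) s) ∨
     ∃ k, 1 ≤ k ∧ k ≤ rn n ∧
       ((Even (regVal k (update (prio e) s)) ∧
           t = (s, e, 2 * k, resetReg k (update (prio e) s))) ∨
        (Odd (regVal k (update (prio e) s)) ∧
           t = (s, e, 2 * k + 1, resetReg k (update (prio e) s)))))}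

/-- States of the safety automaton `S_{n,d}`: `none` is the rejecting state `rej`;
otherwise a state of `R_{n,d}` together with a tuple of counters (bottom first:
`c_0` is the head). -/
abbrev SState : Type := Option (List ℕ × List ℕ)

/-- Counters `c_0,…,c_{k-1}` are reset to `c0`; the rest is kept. -/
def bumpKeep (c0 k : ℕ) (c : List ℕ) : List ℕ := List.replicate k c0 ++ c.drop k

/-- Counters `c_0,…,c_{k-1}` are reset to `c0`; counter `c_k` is decremented. -/
def bumpDec (c0 k : ℕ) (c : List ℕ) : List ℕ :=
  List.replicate k c0 ++ ((c.getD k 0 - 1) :: c.drop (k + 1))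

/-- The safety automaton `S_{n,d}`. -/
def Saut (n d : ℕ) : Automaton SState where
  init := some (List.replicate (rn n) 1, List.replicate (rn n + 1) n)
  trans := {t |
    (∃ e, InAlph n d e ∧ t = (none, e, 1, none)) ∨
    (∃ s c e k s', 1 ≤ k ∧ (s, e, 2 * k, s') ∈ (Raut n d).trans ∧
       t = (some (s, c), e, 2, some (s', bumpKeep n k c))) ∨
    (∃ s c e k s', (s, e, 2 * k + 1, s') ∈ (Raut n d).trans ∧
       ((1 < c.getD k 0 ∧ t = (some (s, c), e, 2, some (s', bumpDec n k c))) ∨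
        (c.getD k 0 = 1 ∧ t = (some (s, c), e, 1, none))))}

/-- `bad(ρ) ≤ B` for an infinite run `ρ`: every infix containing no transition of
priority above an odd `p` contains at most `B` transitions of priority `p`. -/
def badLE {Q : Type*} (ρ : ℕ → Trans Q) (B : ℕ) : Prop :=
  ∀ a b p, Odd p → (∀ i, a ≤ i → i < b → tPrio (ρ i) ≤ p) →
    ((Finset.Ico a b).filter fun i => tPrio (ρ i) = p).card ≤ B

/-- `bad(ρ) ≤ B` for a partial run of length `L` (possibly infinite). -/
def badLEPartial {Q : Type*} (ρ : ℕ → Trans Q) (L : ℕ∞) (B : ℕ) : Prop :=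
  ∀ (a b p : ℕ), Odd p → (b : ℕ∞) ≤ L → (∀ i, a ≤ i → i < b → tPrio (ρ i) ≤ p) →
    ((Finset.Ico a b).filter fun i => tPrio (ρ i) = p).card ≤ B

/-- The strategy subgraph `G_τ`: all outgoing edges of Odd's nodes, and only the
chosen edge from each of Even's nodes. -/
def GtauEdges {n d : ℕ} (G : GameGraph n d) (τ : EPosStrat G) : Set Letter :=
  {e | e ∈ G.edges ∧ (e.1 ∈ G.evenN → e = τ.choice e.1)}

/-- One step along an edge of `E`. -/
def StepRel (E : Set Letter) (u v : ℕ) : Prop := ∃ p, (u, p, v) ∈ E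

/-- Reachability along edges of `E`. -/
def Reach (E : Set Letter) : ℕ → ℕ → Prop := Relation.ReflTransGen (StepRel E)

/-- `V_τ`: the nodes of `G_τ` reachable from the starting node. -/
def Vtau {n d : ℕ} (G : GameGraph n d) (τ : EPosStrat G) : Set ℕ :=
  {v | Reach (GtauEdges G τ) G.start v}

/-- `G_{S,p}`: edges of `E` inside `S` of priority at most `p`. -/
def subEdges (E : Set Letter) (S : Set ℕ) (p : ℕ) : Set Letter :=
  {e | e ∈ E ∧ e.1 ∈ S ∧ e.2.2 ∈ S ∧ prio e ≤ p}

/-- `parts` lists the strongly connected components of the graph `(S, E)` in a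
topological order. -/
def IsSCCDecomp (E : Set Letter) (S : Set ℕ) (parts : List (Set ℕ)) : Prop :=
  (∀ P ∈ parts, P.Nonempty ∧ P ⊆ S) ∧
  (∀ v ∈ S, ∃ P ∈ parts, v ∈ P) ∧
  List.Pairwise Disjoint parts ∧
  (∀ P ∈ parts, ∀ u ∈ P, ∀ v ∈ S, ((Reach E u v ∧ Reach E v u) ↔ v ∈ P)) ∧
  (∀ (i j : ℕ) (hi : i < parts.length) (hj : j < parts.length), i < j →
    ∀ u ∈ parts.get ⟨j, hj⟩, ∀ v ∈ parts.get ⟨i, hi⟩, ¬ StepRel E u v)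

/-- The nodes of a tree given by the children function `ch` with root `(r, R)`. -/
inductive TreeNode (ch : ℕ → Set ℕ → List (Set ℕ)) (r : ℕ) (R : Set ℕ) :
    ℕ → Set ℕ → Prop where
  | root : TreeNode ch r R r R
  | child {k : ℕ} {S T : Set ℕ} : TreeNode ch r R (k + 1) S → T ∈ ch (k + 1) S →
      TreeNode ch r R k T

/-- `ch` describes a game tree of `G_τ`: the root is `(⌈d/2⌉, V_τ)`, and the children
of a node `(k+1, S)` are the SCCs of `G_{S,2(k+1)-1}` in topological order. -/
def IsGameTree {n d : ℕ} (G : GameGraph n d) (τ : EPosStrat G)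
    (ch : ℕ → Set ℕ → List (Set ℕ)) : Prop :=
  ∀ k S, TreeNode ch ((d + 1) / 2) (Vtau G τ) (k + 1) S →
    IsSCCDecomp (subEdges (GtauEdges G τ) S (2 * (k + 1) - 1)) S (ch (k + 1) S)

/-- `fstl ch l k S`: the leftmost descendant of the node `(k, S)` on level `l`
(for `l ≤ k`). -/
def fstl (ch : ℕ → Set ℕ → List (Set ℕ)) (l : ℕ) : ℕ → Set ℕ → Set ℕ
  | 0, S => S
  | k + 1, S => if l = k + 1 then S else fstl ch l k ((ch (k + 1) S).headD ∅)

/-!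
Parity games on game graphs are positionally determined. This follows from Zielonka's recursion
on the graph obtained by subdividing every edge, which moves the priorities to vertices: remove
the attractor of the vertices of top priority and solve the rest; if the player of that parity
wins all of it, she wins everywhere, and otherwise the opponent's winning part together with its
attractor is removed and the rest is solved again.

If Even has a positional winning strategy `τ` in `G`, the SFPG property gives a transition
strategy `σ` of `A` accepting every play consistent with `τ`; playing `τ` at the `G`-vertices
and `σ` at the automaton vertices wins `G × A`, since a play of `G × A` is a play of `G` and a
run of `A` on it whose priorities are interleaved with `1`s. If Odd has a positional winning
strategy `τ`, let it play against Even's winning strategy: in `G` the resulting play contradicts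
`τ` winning, and in `G × A` it contains a play consistent with `τ` and an accepting run on it,
i.e. a word of `PosOdd ∩ L(A)`, which a separator excludes.
-/

def IsMaxInfOft (f : ℕ → ℕ) (p : ℕ) : Prop := InfOft f p ∧ ∀ q, InfOft f q → q ≤ p

/-- Player `true` is Even, player `false` is Odd. -/
def ParityWins (b : Bool) (f : ℕ → ℕ) : Prop :=
  ∃ p, (if b then Even p else Odd p) ∧ IsMaxInfOft f p

theorem not_maxInfOftOdd_of_maxInfOftEven {f : ℕ → ℕ} (h : MaxInfOftEven f) :
    ¬ MaxInfOftOdd f := by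
  rintro ⟨q, hq, hiq, hmq⟩
  obtain ⟨p, hp, hip, hmp⟩ := h
  obtain rfl : p = q := le_antisymm (hmq p hip) (hmp q hiq)
  exact Nat.not_even_iff_odd.mpr hq hp

theorem infOft_shift_iff {f : ℕ → ℕ} {m p : ℕ} :
    InfOft (fun k => f (m + k)) p ↔ InfOft f p := by
  constructor
  · intro h N
    obtain ⟨k, hk, hfk⟩ := h N
    exact ⟨m + k, by omega, hfk⟩
  · intro h N
    obtain ⟨k, hk, hfk⟩ := h (m + N)
    exact ⟨k - m, by omega, by simpa only [Nat.add_sub_cancel' (by omega : m ≤ k)]⟩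

theorem ParityWins.of_shift {b : Bool} {f : ℕ → ℕ} {m : ℕ}
    (h : ParityWins b fun k => f (m + k)) : ParityWins b f := by
  obtain ⟨p, hp, hip, hmax⟩ := h
  exact ⟨p, hp, infOft_shift_iff.mp hip, fun q hq => hmax q (infOft_shift_iff.mpr hq)⟩

theorem parityWins_of_infOft_of_le {b : Bool} {f : ℕ → ℕ} {p : ℕ}
    (hp : if b then Even p else Odd p) (hinf : InfOft f p) (hle : ∀ k, f k ≤ p) :
    ParityWins b f := by
  refine ⟨p, hp, hinf, fun q hq => ?_⟩
  obtain ⟨k, -, rfl⟩ := hq 0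
  exact hle k

theorem exists_infOft_of_bounded {f : ℕ → ℕ} {B : ℕ} (hB : ∀ k, f k ≤ B) :
    ∃ q, InfOft f q := by
  by_contra! h
  simp only [InfOft, not_forall, not_exists, not_and] at h
  choose N hN using h
  let M := (Finset.range (B + 1)).sup N
  exact hN (f M) M (Finset.le_sup (Finset.mem_range.mpr (Nat.lt_succ_of_le (hB M)))) rfl

section Interleave

variable {g p : ℕ → ℕ} {c : ℕ}

theorem infOft_interleave_iff (hge : ∀ k, g (2 * k) = c) (hgo : ∀ k, g (2 * k + 1) = p k)
    {q : ℕ} (hq : q ≠ c) : InfOft g q ↔ InfOft p q := by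
  constructor
  · intro h N
    obtain ⟨j, hj, hgj⟩ := h (2 * N)
    obtain ⟨k, rfl | rfl⟩ := Nat.even_or_odd' j
    · exact absurd (hge k ▸ hgj).symm hq
    · exact ⟨k, by omega, hgo k ▸ hgj⟩
  · intro h N
    obtain ⟨k, hk, hpk⟩ := h N
    exact ⟨2 * k + 1, by omega, (hgo k).trans hpk⟩

theorem isMaxInfOft_interleave_iff (hge : ∀ k, g (2 * k) = c)
    (hgo : ∀ k, g (2 * k + 1) = p k) {q : ℕ} (hq : c < q) :
    IsMaxInfOft g q ↔ IsMaxInfOft p q := by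
  have hiff : ∀ r, r ≠ c → (InfOft g r ↔ InfOft p r) := fun r hr =>
    infOft_interleave_iff hge hgo hr
  refine and_congr (hiff q hq.ne') (forall_congr' fun r => ?_)
  rcases eq_or_ne r c with rfl | hr
  · exact iff_of_true (fun _ => hq.le) (fun _ => hq.le)
  · rw [hiff r hr]

theorem maxInfOftEven_interleave_one_iff (hge : ∀ k, g (2 * k) = 1)
    (hgo : ∀ k, g (2 * k + 1) = p k) (hp : ∀ k, 1 ≤ p k) :
    MaxInfOftEven g ↔ MaxInfOftEven p := by
  have key : ∀ q, Even q → 1 ≤ q → (IsMaxInfOft g q ↔ IsMaxInfOft p q) := fun q hq h1 =>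
    isMaxInfOft_interleave_iff hge hgo (by rcases hq with ⟨r, rfl⟩; omega)
  constructor
  · rintro ⟨q, hq, hmax⟩
    have h1 : 1 ≤ q := hmax.2 1 fun N => ⟨2 * N, by omega, hge N⟩
    exact ⟨q, hq, (key q hq h1).mp hmax⟩
  · rintro ⟨q, hq, hmax⟩
    obtain ⟨k, -, hk⟩ := hmax.1 0
    exact ⟨q, hq, (key q hq (hk ▸ hp k)).mpr hmax⟩

theorem ParityWins.of_interleave_zero {b : Bool} {B : ℕ}
    (hge : ∀ k, g (2 * k) = 0) (hgo : ∀ k, g (2 * k + 1) = p k) (hp : ∀ k, 1 ≤ p k)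
    (hB : ∀ k, p k ≤ B) (h : ParityWins b g) : ParityWins b p := by
  obtain ⟨q, hq, hmax⟩ := h
  obtain ⟨r, hr⟩ := exists_infOft_of_bounded hB
  obtain ⟨k, -, hk⟩ := hr 0
  have hr1 : 1 ≤ r := hk ▸ hp k
  have hrq : r ≤ q := hmax.2 r ((infOft_interleave_iff hge hgo (by omega)).mpr hr)
  exact ⟨q, hq, (isMaxInfOft_interleave_iff hge hgo (by omega)).mp hmax⟩

end Interleave

structure VertexGame (V : Type*) where
  Adj : V → V → Prop
  owner : V → Bool
  prio : V → ℕ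

namespace VertexGame

open scoped Classical

variable {V : Type*} (g : VertexGame V)

def Total (U : Finset V) : Prop := ∀ v ∈ U, ∃ u ∈ U, g.Adj v u

def IsPlayIn (U : Finset V) (v : ℕ → V) : Prop := ∀ k, v k ∈ U ∧ g.Adj (v k) (v (k + 1))

/-- Consistency with `f` is only required while the play is in `W`, which `move` and `forced`
prevent it from leaving. -/
structure WinsOn (U : Finset V) (W : Set V) (b : Bool) (f : V → V) : Prop where
  subset : W ⊆ U
  move : ∀ v ∈ W, g.owner v = b → f v ∈ W ∧ g.Adj v (f v)
  forced : ∀ v ∈ W, g.owner v ≠ b → ∀ u ∈ U, g.Adj v u → u ∈ W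
  wins : ∀ v, g.IsPlayIn U v → (∀ k, v k ∈ W → g.owner (v k) = b → v (k + 1) = f (v k)) →
    v 0 ∈ W → ParityWins b fun k => g.prio (v k)

variable {g}

theorem IsPlayIn.shift {U : Finset V} {v : ℕ → V} (hv : g.IsPlayIn U v) (m : ℕ) :
    g.IsPlayIn U fun k => v (m + k) := fun k => by
  simpa only [Nat.add_assoc] using hv (m + k)

theorem IsPlayIn.forall_mem_of_closed {U : Finset V} {W : Set V} {b : Bool} {f : V → V}
    (hmove : ∀ v ∈ W, g.owner v = b → f v ∈ W ∧ g.Adj v (f v))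
    (hforced : ∀ v ∈ W, g.owner v ≠ b → ∀ u ∈ U, g.Adj v u → u ∈ W)
    {v : ℕ → V} (hv : g.IsPlayIn U v)
    (hcons : ∀ k, v k ∈ W → g.owner (v k) = b → v (k + 1) = f (v k)) (h0 : v 0 ∈ W) :
    ∀ k, v k ∈ W := by
  intro k
  induction k with
  | zero => exact h0
  | succ k ih =>
    by_cases ho : g.owner (v k) = b
    · exact hcons k ih ho ▸ (hmove _ ih ho).1
    · exact hforced _ ih ho _ (hv (k + 1)).1 (hv k).2

theorem winsOn_empty (U : Finset V) (b : Bool) (f : V → V) : g.WinsOn U ∅ b f where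
  subset := Set.empty_subset _
  move _ h := h.elim
  forced _ h := h.elim
  wins _ _ _ h := h.elim

theorem WinsOn.of_trap {U U' : Finset V} {W : Set V} {b : Bool} {f : V → V}
    (h : g.WinsOn U' W b f) (hU' : U' ⊆ U)
    (htrap : ∀ v ∈ U', g.owner v ≠ b → ∀ u ∈ U, g.Adj v u → u ∈ U') : g.WinsOn U W b f := by
  have hforced : ∀ v ∈ W, g.owner v ≠ b → ∀ u ∈ U, g.Adj v u → u ∈ W :=
    fun v hv ho u hu hvu => h.forced v hv ho u (htrap v (h.subset hv) ho u hu hvu) hvu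
  refine ⟨h.subset.trans (Finset.coe_subset.mpr hU'), h.move, hforced, fun v hv hcons h0 => ?_⟩
  have hW := hv.forall_mem_of_closed h.move hforced hcons h0
  exact h.wins v (fun k => ⟨h.subset (hW k), (hv k).2⟩) hcons h0

section Attractor

variable (g) (b : Bool) (U : Finset V) (T : Set V)

def attrStep (X : Set V) : Set V :=
  X ∪ {v | v ∈ U ∧ ((g.owner v = b ∧ ∃ u ∈ U, g.Adj v u ∧ u ∈ X) ∨
    (g.owner v ≠ b ∧ ∀ u ∈ U, g.Adj v u → u ∈ X))}

def attrN : ℕ → Set V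
  | 0 => T
  | i + 1 => g.attrStep b U (attrN i)

def attr : Set V := ⋃ i, g.attrN b U T i

/-- A successor in the lowest possible layer of the attractor. -/
noncomputable def attrStrategy (v : V) : V :=
  if h : ∃ i, ∃ u ∈ U, g.Adj v u ∧ u ∈ g.attrN b U T i then (Nat.find_spec h).choose
  else if h' : ∃ u ∈ U, g.Adj v u then h'.choose else v

variable {g b U T}

theorem attrN_mono : Monotone (g.attrN b U T) :=
  monotone_nat_of_le_succ fun _ => Set.subset_union_left

theorem subset_attr : T ⊆ g.attr b U T := Set.subset_iUnion (g.attrN b U T) 0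

theorem attr_subset (hT : T ⊆ U) : g.attr b U T ⊆ U := by
  refine Set.iUnion_subset fun i => ?_
  induction i with
  | zero => exact hT
  | succ i ih => exact Set.union_subset ih fun v hv => hv.1

theorem exists_layer {v : V} (hv : v ∈ g.attr b U T) (hvT : v ∉ T) :
    ∃ i, v ∉ g.attrN b U T i ∧ v ∈ U ∧
      ((g.owner v = b ∧ ∃ u ∈ U, g.Adj v u ∧ u ∈ g.attrN b U T i) ∨
        (g.owner v ≠ b ∧ ∀ u ∈ U, g.Adj v u → u ∈ g.attrN b U T i)) := by
  have hex : ∃ i, v ∈ g.attrN b U T i := Set.mem_iUnion.mp hv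
  obtain ⟨i, hi⟩ : ∃ i, Nat.find hex = i + 1 :=
    Nat.exists_eq_succ_of_ne_zero fun h0 => hvT <| by
      simpa only [h0, attrN] using Nat.find_spec hex
  have hmem := Nat.find_spec hex
  have hnot : v ∉ g.attrN b U T i := Nat.find_min hex (by omega)
  rw [hi] at hmem
  exact ⟨i, hnot, hmem.resolve_left hnot⟩

theorem attr_forced {v : V} (hv : v ∈ g.attr b U T) (hvT : v ∉ T) (ho : g.owner v ≠ b) :
    ∀ u ∈ U, g.Adj v u → u ∈ g.attr b U T := by
  obtain ⟨i, -, -, ⟨ho', -⟩ | ⟨-, hall⟩⟩ := exists_layer hv hvT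
  · exact absurd ho' ho
  · exact fun u hu hvu => Set.mem_iUnion.mpr ⟨i, hall u hu hvu⟩

theorem attrStrategy_spec {v : V} {i : ℕ} (h : ∃ u ∈ U, g.Adj v u ∧ u ∈ g.attrN b U T i) :
    g.attrStrategy b U T v ∈ U ∧ g.Adj v (g.attrStrategy b U T v) ∧
      g.attrStrategy b U T v ∈ g.attrN b U T i := by
  have hex : ∃ i, ∃ u ∈ U, g.Adj v u ∧ u ∈ g.attrN b U T i := ⟨i, h⟩
  obtain ⟨hu, hvu, hmem⟩ := (Nat.find_spec hex).choose_spec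
  rw [attrStrategy, dif_pos hex]
  exact ⟨hu, hvu, attrN_mono (Nat.find_min' hex h) hmem⟩

theorem attrStrategy_adj (hU : g.Total U) {v : V} (hv : v ∈ U) :
    g.attrStrategy b U T v ∈ U ∧ g.Adj v (g.attrStrategy b U T v) := by
  by_cases hex : ∃ i, ∃ u ∈ U, g.Adj v u ∧ u ∈ g.attrN b U T i
  · obtain ⟨i, hi⟩ := hex
    exact (attrStrategy_spec hi).imp_right And.left
  · rw [attrStrategy, dif_neg hex, dif_pos (hU v hv)]
    exact (hU v hv).choose_spec

theorem attrStrategy_mem {v : V} (hv : v ∈ g.attr b U T) (hvT : v ∉ T) (ho : g.owner v = b) :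
    g.attrStrategy b U T v ∈ g.attr b U T ∧ g.Adj v (g.attrStrategy b U T v) := by
  obtain ⟨i, -, -, ⟨-, hex⟩ | ⟨ho', -⟩⟩ := exists_layer hv hvT
  · obtain ⟨-, hvu, hmem⟩ := attrStrategy_spec hex
    exact ⟨Set.mem_iUnion.mpr ⟨i, hmem⟩, hvu⟩
  · exact absurd ho ho'

theorem attr_reach {v : ℕ → V} (hv : g.IsPlayIn U v)
    (hcons : ∀ k, v k ∈ g.attr b U T → v k ∉ T → g.owner (v k) = b →
      v (k + 1) = g.attrStrategy b U T (v k))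
    (h0 : v 0 ∈ g.attr b U T) : ∃ j, v j ∈ T := by
  obtain ⟨i, hi⟩ := Set.mem_iUnion.mp h0
  induction i generalizing v with
  | zero => exact ⟨0, hi⟩
  | succ i ih =>
    by_cases hprev : v 0 ∈ g.attrN b U T i
    · exact ih hv hcons h0 hprev
    have hT : v 0 ∉ T := fun hT => hprev (attrN_mono (Nat.zero_le i) hT)
    have h1 : v (1 + 0) ∈ g.attrN b U T i := by
      rw [Nat.add_zero]
      rcases (hi.resolve_left hprev).2 with ⟨ho, hex⟩ | ⟨ho, hall⟩
      · exact hcons 0 h0 hT ho ▸ (attrStrategy_spec hex).2.2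
      · exact hall _ (hv 1).1 (hv 0).2
    obtain ⟨j, hj⟩ := ih (v := fun k => v (1 + k)) (hv.shift 1)
      (fun k => by simpa only [Nat.add_assoc] using hcons (1 + k))
      (Set.mem_iUnion.mpr ⟨i, h1⟩) h1
    exact ⟨1 + j, hj⟩

theorem attr_compl_closed {v : V} (hvU : v ∈ U) (hv : v ∉ g.attr b U T)
    (ho : g.owner v = b) : ∀ u ∈ U, g.Adj v u → u ∉ g.attr b U T := by
  intro u hu hvu hmem
  obtain ⟨i, hi⟩ := Set.mem_iUnion.mp hmem
  exact hv (Set.mem_iUnion.mpr ⟨i + 1, Or.inr ⟨hvU, Or.inl ⟨ho, u, hu, hvu, hi⟩⟩⟩)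

theorem exists_adj_not_mem_attr {v : V} (hvU : v ∈ U) (hv : v ∉ g.attr b U T)
    (ho : g.owner v ≠ b) : ∃ u ∈ U, g.Adj v u ∧ u ∉ g.attr b U T := by
  by_contra! h
  choose! N hN using fun u hu hvu => Set.mem_iUnion.mp (h u hu hvu)
  refine hv (Set.mem_iUnion.mpr ⟨U.sup N + 1, Or.inr ⟨hvU, Or.inr ⟨ho, fun u hu hvu => ?_⟩⟩⟩)
  exact attrN_mono (Finset.le_sup hu) (hN u hu hvu)

theorem Total.compl_attr (hU : g.Total U) : g.Total (U.filter (· ∉ g.attr b U T)) := by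
  intro v hv
  rw [Finset.mem_filter] at hv
  by_cases ho : g.owner v = b
  · obtain ⟨u, hu, hvu⟩ := hU v hv.1
    exact ⟨u, Finset.mem_filter.mpr ⟨hu, attr_compl_closed hv.1 hv.2 ho u hu hvu⟩, hvu⟩
  · obtain ⟨u, hu, hvu, hnot⟩ := exists_adj_not_mem_attr hv.1 hv.2 ho
    exact ⟨u, Finset.mem_filter.mpr ⟨hu, hnot⟩, hvu⟩

theorem compl_attr_trap : ∀ v ∈ U.filter (· ∉ g.attr b U T), g.owner v ≠ !b →
    ∀ u ∈ U, g.Adj v u → u ∈ U.filter (· ∉ g.attr b U T) := by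
  intro v hv ho u hu hvu
  rw [Finset.mem_filter] at hv ⊢
  exact ⟨hu, attr_compl_closed hv.1 hv.2 (Bool.not_eq_not.mp ho) u hu hvu⟩

end Attractor

variable {b : Bool} {U : Finset V}

theorem WinsOn.attr {W : Set V} {f : V → V} (h : g.WinsOn U W b f) :
    g.WinsOn U (g.attr b U W) b (W.piecewise f (g.attrStrategy b U W)) := by
  set F := W.piecewise f (g.attrStrategy b U W) with hF
  have hmove : ∀ v ∈ g.attr b U W, g.owner v = b → F v ∈ g.attr b U W ∧ g.Adj v (F v) := by
    intro v hv ho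
    by_cases hvW : v ∈ W
    · rw [hF, Set.piecewise_eq_of_mem _ _ _ hvW]
      exact (h.move v hvW ho).imp_left (subset_attr ·)
    · rw [hF, Set.piecewise_eq_of_notMem _ _ _ hvW]
      exact attrStrategy_mem hv hvW ho
  have hforced : ∀ v ∈ g.attr b U W, g.owner v ≠ b → ∀ u ∈ U, g.Adj v u →
      u ∈ g.attr b U W := by
    intro v hv ho u hu hvu
    by_cases hvW : v ∈ W
    · exact subset_attr (h.forced v hvW ho u hu hvu)
    · exact attr_forced hv hvW ho u hu hvu
  refine ⟨attr_subset h.subset, hmove, hforced, fun v hv hcons h0 => ?_⟩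
  have hA := hv.forall_mem_of_closed hmove hforced hcons h0
  obtain ⟨j, hj⟩ := attr_reach hv (fun k hk hkW ho => by
    rw [hcons k hk ho, hF, Set.piecewise_eq_of_notMem _ _ _ hkW]) h0
  refine ParityWins.of_shift (h.wins _ (hv.shift j) (fun k hk ho => ?_) (by simpa using hj))
  simpa only [hF, Set.piecewise_eq_of_mem _ _ _ hk, Nat.add_assoc] using
    hcons (j + k) (hA _) ho

theorem WinsOn.union {X Y : Set V} {f h : V → V} (hX : g.WinsOn U X b f)
    (hY : g.WinsOn (U.filter (· ∉ X)) Y b h) : g.WinsOn U (X ∪ Y) b (X.piecewise f h) := by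
  set F := X.piecewise f h with hF
  have hYX : ∀ v ∈ Y, v ∉ X := fun v hv => (Finset.mem_filter.mp (hY.subset hv)).2
  have hmove : ∀ v ∈ X ∪ Y, g.owner v = b → F v ∈ X ∪ Y ∧ g.Adj v (F v) := by
    rintro v (hv | hv) ho
    · rw [hF, Set.piecewise_eq_of_mem _ _ _ hv]
      exact (hX.move v hv ho).imp_left Or.inl
    · rw [hF, Set.piecewise_eq_of_notMem _ _ _ (hYX v hv)]
      exact (hY.move v hv ho).imp_left Or.inr
  have hforced : ∀ v ∈ X ∪ Y, g.owner v ≠ b → ∀ u ∈ U, g.Adj v u → u ∈ X ∪ Y := by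
    rintro v (hv | hv) ho u hu hvu
    · exact Or.inl (hX.forced v hv ho u hu hvu)
    · by_cases huX : u ∈ X
      · exact Or.inl huX
      · exact Or.inr (hY.forced v hv ho u (Finset.mem_filter.mpr ⟨hu, huX⟩) hvu)
  have hsub : X ∪ Y ⊆ U := Set.union_subset hX.subset fun v hv =>
    Finset.mem_of_mem_filter v (hY.subset hv)
  refine ⟨hsub, hmove, hforced, fun v hv hcons h0 => ?_⟩
  have hXY := hv.forall_mem_of_closed hmove hforced hcons h0
  by_cases hentry : ∃ j, v j ∈ X
  · obtain ⟨j, hj⟩ := hentry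
    refine ParityWins.of_shift (hX.wins _ (hv.shift j) (fun k hk ho => ?_) (by simpa using hj))
    simpa only [hF, Set.piecewise_eq_of_mem _ _ _ hk, Nat.add_assoc] using
      hcons (j + k) (Or.inl hk) ho
  · push Not at hentry
    refine hY.wins v (fun k => ⟨Finset.mem_filter.mpr ⟨(hv k).1, hentry k⟩, (hv k).2⟩)
      (fun k hk ho => ?_) ((hXY 0).resolve_left (hentry 0))
    rw [hcons k (Or.inr hk) ho, hF, Set.piecewise_eq_of_notMem _ _ _ (hentry k)]

/-- A play either visits the attractor, hence the priority `p`, infinitely often, or it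
eventually stays in the complement. -/
theorem winsOn_of_compl_attr {T : Set V} {p : ℕ} {f : V → V} (hU : g.Total U)
    (hp : if b then Even p else Odd p) (hle : ∀ v ∈ U, g.prio v ≤ p)
    (hT : ∀ v ∈ T, g.prio v = p)
    (h : g.WinsOn (U.filter (· ∉ g.attr b U T)) ↑(U.filter (· ∉ g.attr b U T)) b f) :
    g.WinsOn U U b ((g.attr b U T).piecewise (g.attrStrategy b U T) f) := by
  set A := g.attr b U T
  set F := A.piecewise (g.attrStrategy b U T) f with hF
  have hmove : ∀ v ∈ (U : Set V), g.owner v = b → F v ∈ (U : Set V) ∧ g.Adj v (F v) := by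
    intro v hv ho
    by_cases hvA : v ∈ A
    · rw [hF, Set.piecewise_eq_of_mem _ _ _ hvA]
      exact attrStrategy_adj hU hv
    · rw [hF, Set.piecewise_eq_of_notMem _ _ _ hvA]
      obtain ⟨hfv, hadj⟩ := h.move v (Finset.mem_filter.mpr ⟨hv, hvA⟩) ho
      exact ⟨Finset.mem_of_mem_filter _ hfv, hadj⟩
  refine ⟨subset_rfl, hmove, fun _ _ _ u hu _ => hu, fun v hv hcons _ => ?_⟩
  by_cases hinf : ∀ m, ∃ k, m ≤ k ∧ v k ∈ A
  · refine parityWins_of_infOft_of_le hp (fun m => ?_) (fun k => hle _ (hv k).1)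
    obtain ⟨k, hk, hkA⟩ := hinf m
    obtain ⟨j, hj⟩ := attr_reach (hv.shift k) (fun i hi hiT ho => by
      rw [← Nat.add_assoc, hcons (k + i) (hv _).1 ho, hF, Set.piecewise_eq_of_mem _ _ _ hi])
      (by simpa using hkA)
    exact ⟨k + j, by omega, hT _ hj⟩
  · push Not at hinf
    obtain ⟨m, hm⟩ := hinf
    refine ParityWins.of_shift (h.wins _ (fun k => ⟨Finset.mem_filter.mpr ⟨(hv _).1,
      hm _ (by omega)⟩, (hv (m + k)).2⟩) (fun k _ ho => ?_) ?_)
    · rw [← Nat.add_assoc, hcons (m + k) (hv _).1 ho, hF,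
        Set.piecewise_eq_of_notMem _ _ _ (hm _ (by omega))]
    · exact Finset.mem_filter.mpr ⟨(hv _).1, hm _ (by omega)⟩

theorem if_decide_even (p : ℕ) : if decide (Even p) then Even p else Odd p := by
  by_cases h : Even p
  · simp [h]
  · simpa [h] using Nat.not_even_iff_odd.mp h

theorem union_true_false_eq (W : Bool → Set V) (b : Bool) :
    W true ∪ W false = W b ∪ W (!b) := by
  cases b
  · exact Set.union_comm _ _
  · rfl

theorem exists_winsOn_of_pair {X Y : Set V} {f h : V → V} (hX : g.WinsOn U X b f)
    (hY : g.WinsOn U Y (!b) h) (hcover : ↑U ⊆ X ∪ Y) :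
    ∃ W : Bool → Set V, ∃ F : Bool → V → V,
      ↑U ⊆ W true ∪ W false ∧ ∀ c, g.WinsOn U (W c) c (F c) := by
  refine ⟨fun c => if c = b then X else Y, fun c => if c = b then f else h, ?_, fun c => ?_⟩
  · cases b
    · simpa [Set.union_comm] using hcover
    · simpa using hcover
  · by_cases hc : c = b
    · subst hc
      simpa using hX
    · obtain rfl : c = !b := Bool.eq_not.mpr hc
      simpa using hY

theorem exists_winsOn (U : Finset V) (hU : g.Total U) :
    ∃ W : Bool → Set V, ∃ f : Bool → V → V,
      ↑U ⊆ W true ∪ W false ∧ ∀ b, g.WinsOn U (W b) b (f b) := by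
  induction U using Finset.strongInduction with
  | H U ih =>
  rcases U.eq_empty_or_nonempty with rfl | hne
  · exact ⟨fun _ => ∅, fun _ => id, by simp, fun b => winsOn_empty _ _ _⟩
  obtain ⟨v0, hv0, hle⟩ := U.exists_max_image g.prio hne
  set p := g.prio v0
  set b := decide (Even p)
  set T : Set V := {v | v ∈ U ∧ g.prio v = p}
  set U' := U.filter (· ∉ g.attr b U T)
  have hU' : U' ⊂ U := Finset.filter_ssubset.mpr
    ⟨v0, hv0, not_not.mpr (subset_attr ⟨hv0, rfl⟩)⟩
  obtain ⟨W', f', hcov', hwin'⟩ := ih U' hU' hU.compl_attr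
  by_cases hlost : W' (!b) = ∅
  · have hW' : W' b = U' := by
      refine (hwin' b).subset.antisymm fun v hv => ?_
      simpa [union_true_false_eq W' b, hlost] using hcov' hv
    exact exists_winsOn_of_pair (winsOn_of_compl_attr hU (if_decide_even p) hle (fun v hv => hv.2)
      (hW' ▸ hwin' b)) (winsOn_empty U (!b) id) (by simp)
  · obtain ⟨x, hx⟩ := Set.nonempty_iff_ne_empty.mpr hlost
    have hopp : g.WinsOn U (W' (!b)) (!b) (f' (!b)) :=
      (hwin' (!b)).of_trap (Finset.filter_subset _ _) compl_attr_trap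
    set B := g.attr (!b) U (W' (!b))
    have hU'' : U.filter (· ∉ B) ⊂ U := Finset.filter_ssubset.mpr
      ⟨x, hopp.subset hx, not_not.mpr (subset_attr hx)⟩
    obtain ⟨W'', f'', hcov'', hwin''⟩ := ih _ hU'' hU.compl_attr
    have hwin : g.WinsOn U (W'' b) b (f'' b) :=
      (hwin'' b).of_trap (Finset.filter_subset _ _) (by simpa using compl_attr_trap (b := !b))
    refine exists_winsOn_of_pair hwin (hopp.attr.union (hwin'' (!b))) fun v hv => ?_
    by_cases hvB : v ∈ B
    · exact Or.inr (Or.inl hvB)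
    · have := hcov'' (Finset.mem_filter.mpr ⟨hv, hvB⟩)
      rw [union_true_false_eq W'' b] at this
      exact this.imp_right Or.inr

end VertexGame

namespace GameGraph

open scoped Classical

variable {n d : ℕ} (G : GameGraph n d)

noncomputable def splitGame : VertexGame (ℕ ⊕ Letter) where
  Adj
    | Sum.inl u, Sum.inr e => e ∈ G.edges ∧ e.1 = u
    | Sum.inr e, Sum.inl v => e ∈ G.edges ∧ e.2.2 = v
    | _, _ => False
  owner := Sum.elim (fun v => decide (v ∈ G.evenN)) fun _ => false
  prio := Sum.elim (fun _ => 0) prio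

noncomputable def edgeFinset : Finset Letter :=
  (Finset.Icc 1 n ×ˢ Finset.Icc 1 d ×ˢ Finset.Icc 1 n).filter (· ∈ G.edges)

noncomputable def splitVertices : Finset (ℕ ⊕ Letter) := (Finset.Icc 1 n).disjSum G.edgeFinset

variable {G}

theorem mem_edgeFinset {e : Letter} : e ∈ G.edgeFinset ↔ e ∈ G.edges := by
  refine Finset.mem_filter.trans (and_iff_right_of_imp fun he => ?_)
  obtain ⟨h1, h2, h3, h4, h5, h6⟩ := G.edges_alph e he
  simp [Finset.mem_product, h1, h2, h3, h4, h5, h6]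

theorem src_mem_Icc {e : Letter} (he : e ∈ G.edges) : e.1 ∈ Set.Icc 1 n :=
  ⟨(G.edges_alph e he).1, (G.edges_alph e he).2.1⟩

theorem tgt_mem_Icc {e : Letter} (he : e ∈ G.edges) : e.2.2 ∈ Set.Icc 1 n :=
  ⟨(G.edges_alph e he).2.2.2.2.1, (G.edges_alph e he).2.2.2.2.2⟩

theorem mem_oddN_of_not_mem_evenN {v : ℕ} (hv : v ∈ Set.Icc 1 n) (he : v ∉ G.evenN) :
    v ∈ G.oddN :=
  ((G.union_eq ▸ hv : v ∈ G.evenN ∪ G.oddN)).resolve_left he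

theorem not_mem_evenN_of_mem_oddN {v : ℕ} (hv : v ∈ G.oddN) : v ∉ G.evenN :=
  Set.disjoint_right.mp G.disj hv

theorem splitGame_adj_inl {u : ℕ} {y : ℕ ⊕ Letter} :
    G.splitGame.Adj (Sum.inl u) y ↔ ∃ e ∈ G.edges, e.1 = u ∧ y = Sum.inr e := by
  cases y <;> simp [splitGame]

theorem splitGame_adj_inr {e : Letter} {y : ℕ ⊕ Letter} :
    G.splitGame.Adj (Sum.inr e) y ↔ e ∈ G.edges ∧ y = Sum.inl e.2.2 := by
  cases y <;> simp [splitGame, eq_comm]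

theorem splitGame_total : G.splitGame.Total G.splitVertices := by
  rintro (v | e) hv
  · obtain ⟨e, he, rfl⟩ := G.total v (by simpa [splitVertices] using hv)
    exact ⟨Sum.inr e, by simpa [splitVertices, mem_edgeFinset] using he,
      splitGame_adj_inl.mpr ⟨e, he, rfl, rfl⟩⟩
  · have he : e ∈ G.edges := by simpa [splitVertices, mem_edgeFinset] using hv
    exact ⟨Sum.inl e.2.2, by simpa [splitVertices] using tgt_mem_Icc he,
      splitGame_adj_inr.mpr ⟨he, rfl⟩⟩

def splitPlay (w : Word) (j : ℕ) : ℕ ⊕ Letter :=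
  if j % 2 = 0 then Sum.inl (w (j / 2)).1 else Sum.inr (w (j / 2))

theorem splitPlay_two_mul (w : Word) (k : ℕ) : splitPlay w (2 * k) = Sum.inl (w k).1 := by
  simp [splitPlay]

theorem splitPlay_two_mul_add_one (w : Word) (k : ℕ) :
    splitPlay w (2 * k + 1) = Sum.inr (w k) := by
  simp [splitPlay, Nat.add_mod, Nat.add_div]

theorem isPlayIn_splitPlay {w : Word} (hw : IsPlay G w) :
    G.splitGame.IsPlayIn G.splitVertices (splitPlay w) := by
  intro j
  obtain ⟨k, rfl | rfl⟩ := Nat.even_or_odd' j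
  · rw [splitPlay_two_mul, splitPlay_two_mul_add_one]
    exact ⟨by simpa [splitVertices] using src_mem_Icc (hw.2 k).1,
      splitGame_adj_inl.mpr ⟨w k, (hw.2 k).1, rfl, rfl⟩⟩
  · rw [splitPlay_two_mul_add_one, show 2 * k + 1 + 1 = 2 * (k + 1) by ring, splitPlay_two_mul]
    exact ⟨by simpa [splitVertices, mem_edgeFinset] using (hw.2 k).1,
      splitGame_adj_inr.mpr ⟨(hw.2 k).1, by rw [(hw.2 k).2]⟩⟩

theorem parityWins_of_splitPlay {b : Bool} {w : Word} (hw : IsPlay G w)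
    (h : ParityWins b fun j => G.splitGame.prio (splitPlay w j)) :
    ParityWins b fun k => prio (w k) :=
  h.of_interleave_zero (fun k => by simp [splitPlay_two_mul, splitGame])
    (fun k => by simp [splitPlay_two_mul_add_one, splitGame])
    (fun k => (G.edges_alph _ (hw.2 k).1).2.2.1) (fun k => (G.edges_alph _ (hw.2 k).1).2.2.2.1)

theorem exists_choice_of_winsOn {b : Bool} {W : Set (ℕ ⊕ Letter)}
    {f : ℕ ⊕ Letter → ℕ ⊕ Letter}
    (h : G.splitGame.WinsOn G.splitVertices W b f) (hstart : Sum.inl G.start ∈ W) :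
    ∃ c : ℕ → Letter, (∀ v ∈ Set.Icc 1 n, decide (v ∈ G.evenN) = b →
        c v ∈ G.edges ∧ (c v).1 = v) ∧
      ∀ w, IsPlay G w → (∀ k, decide ((w k).1 ∈ G.evenN) = b → w k = c (w k).1) →
        ParityWins b fun k => prio (w k) := by
  have hmove : ∀ v, Sum.inl v ∈ W → decide (v ∈ G.evenN) = b →
      ∃ e ∈ G.edges, e.1 = v ∧ f (Sum.inl v) = Sum.inr e := fun v hv ho =>
    splitGame_adj_inl.mp (h.move _ hv ho).2
  let c : ℕ → Letter := fun v =>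
    if Sum.inl v ∈ W then Sum.elim (fun _ => (0, 0, 0)) id (f (Sum.inl v))
    else Classical.epsilon fun e => e ∈ G.edges ∧ e.1 = v
  have hc : ∀ v, Sum.inl v ∈ W → decide (v ∈ G.evenN) = b → f (Sum.inl v) = Sum.inr (c v) := by
    intro v hv ho
    obtain ⟨e, -, -, he⟩ := hmove v hv ho
    simp only [c, if_pos hv, he, Sum.elim_inr, id]
  refine ⟨c, fun v hv ho => ?_, fun w hw hcons => ?_⟩
  · by_cases hvW : Sum.inl v ∈ W
    · obtain ⟨e, he, hev, hfe⟩ := hmove v hvW ho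
      rw [hc v hvW ho, Sum.inr.injEq] at hfe
      exact hfe ▸ ⟨he, hev⟩
    · simp only [c, if_neg hvW]
      exact Classical.epsilon_spec (G.total v hv)
  have hcons' : ∀ j, splitPlay w j ∈ W → G.splitGame.owner (splitPlay w j) = b →
      splitPlay w (j + 1) = f (splitPlay w j) := by
    intro j hj ho
    obtain ⟨k, rfl | rfl⟩ := Nat.even_or_odd' j
    · rw [splitPlay_two_mul] at hj ho ⊢
      rw [splitPlay_two_mul_add_one, hc _ hj ho, ← hcons k ho]
    · rw [splitPlay_two_mul_add_one] at hj ho ⊢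
      rw [show 2 * k + 1 + 1 = 2 * (k + 1) by ring, splitPlay_two_mul, ← (hw.2 k).2]
      exact (splitGame_adj_inr.mp (h.move _ hj ho).2).2.symm
  exact parityWins_of_splitPlay hw <| h.wins _ (isPlayIn_splitPlay hw) hcons'
    (by simpa [splitPlay_two_mul w 0, hw.1] using hstart)

theorem positional_determinacy :
    (∃ τ : EPosStrat G, EWinningPos τ) ∨ ∃ τ : OPosStrat G, OWinningPos τ := by
  obtain ⟨W, f, hcover, hwin⟩ := G.splitGame.exists_winsOn G.splitVertices splitGame_total
  have hstart : Sum.inl G.start ∈ (G.splitVertices : Set (ℕ ⊕ Letter)) := by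
    simpa [splitVertices] using G.start_mem
  rcases hcover hstart with hs | hs
  · obtain ⟨c, hc, hwins⟩ := exists_choice_of_winsOn (hwin true) hs
    refine Or.inl ⟨⟨c, fun v hv => hc v ?_ (decide_eq_true hv)⟩, fun w hw => ?_⟩
    · exact G.union_eq ▸ Or.inl hv
    · exact hwins w hw.1 fun k hk => hw.2 k (of_decide_eq_true hk)
  · obtain ⟨c, hc, hwins⟩ := exists_choice_of_winsOn (hwin false) hs
    refine Or.inr ⟨⟨c, fun v hv => hc v ?_ (decide_eq_false (not_mem_evenN_of_mem_oddN hv))⟩,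
      fun w hw heven => ?_⟩
    · exact G.union_eq ▸ Or.inr hv
    · refine not_maxInfOftOdd_of_maxInfOftEven heven (hwins w hw.1 fun k hk => hw.2 k ?_)
      exact mem_oddN_of_not_mem_evenN (src_mem_Icc (hw.1.2 k).1) (of_decide_eq_false hk)

end GameGraph

section Plays

variable {V : Type*} {E : Set (V × ℕ × V)}

def endpoint (u : V) (l : List (V × ℕ × V)) : V := l.foldl (fun _ e => e.2.2) u

@[simp]
theorem endpoint_append_singleton (u : V) (l : List (V × ℕ × V)) (e : V × ℕ × V) :
    endpoint u (l ++ [e]) = e.2.2 := by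
  simp [endpoint, List.foldl_append]

theorem IsFinPath.endpoint_eq {u v : V} {l : List (V × ℕ × V)} (h : IsFinPath E u l v) :
    endpoint u l = v := by
  induction l generalizing u with
  | nil => exact h
  | cons e l ih => exact ih h.2.2

theorem IsFinPath.append_singleton {u v : V} {l : List (V × ℕ × V)} {e : V × ℕ × V}
    (h : IsFinPath E u l v) (he : e ∈ E) (hev : e.1 = v) : IsFinPath E u (l ++ [e]) e.2.2 := by
  induction l generalizing u with
  | nil => exact ⟨he, hev.trans h.symm, rfl⟩
  | cons f l ih => exact ⟨h.1, h.2.1, ih h.2.2⟩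

theorem IsFinPath.eq_or_exists_edge {u v : V} {l : List (V × ℕ × V)} (h : IsFinPath E u l v) :
    v = u ∨ ∃ e ∈ E, e.2.2 = v := by
  induction l generalizing u with
  | nil => exact Or.inl h.symm
  | cons e l ih => exact Or.inr ((ih h.2.2).elim (fun hv => ⟨e, h.1, hv.symm⟩) id)

theorem IsPathSeq.isFinPath_prefix {w : ℕ → V × ℕ × V} (hw : IsPathSeq E w) (k : ℕ) :
    IsFinPath E (w 0).1 ((List.range k).map w) (w k).1 := by
  induction k with
  | zero => rfl
  | succ k ih =>
    rw [List.range_succ, List.map_append, List.map_singleton, ← (hw k).2]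
    exact ih.append_singleton (hw k).1 rfl

theorem exists_seq_eq_history {α : Type*} (next : List α → α) :
    ∃ w : ℕ → α, ∀ k, w k = next ((List.range k).map w) := by
  let H : ℕ → List α := fun k => Nat.rec [] (fun _ l => l ++ [next l]) k
  have hH : ∀ k, (List.range k).map (fun j => next (H j)) = H k := by
    intro k
    induction k with
    | zero => rfl
    | succ k ih => rw [List.range_succ, List.map_append, ih]; rfl
  exact ⟨fun k => next (H k), fun k => by rw [hH]⟩

end Plays

namespace PGame

open scoped Classical

variable {V : Type*} (g : PGame V)

def Reachable (v : V) : Prop := ∃ l, IsFinPath g.edges g.start l v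

variable {g}

theorem IsPlay.endpoint_prefix {w : ℕ → V × ℕ × V} (hw : g.IsPlay w) (k : ℕ) :
    endpoint g.start ((List.range k).map w) = (w k).1 :=
  (hw.1 ▸ hw.2.isFinPath_prefix k).endpoint_eq

theorem exists_play (str : List (V × ℕ × V) → V × ℕ × V)
    (hstr : ∀ l v, IsFinPath g.edges g.start l v → g.evenOwn v → str l ∈ g.edges ∧ (str l).1 = v)
    (m : V → V × ℕ × V) (hm : ∀ v, g.Reachable v → ¬ g.evenOwn v → m v ∈ g.edges ∧ (m v).1 = v) :
    ∃ w, g.IsPlay w ∧ (∀ k, g.evenOwn (w k).1 → w k = str ((List.range k).map w)) ∧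
      ∀ k, ¬ g.evenOwn (w k).1 → w k = m (w k).1 := by
  let next : List (V × ℕ × V) → V × ℕ × V := fun l =>
    if g.evenOwn (endpoint g.start l) then str l else m (endpoint g.start l)
  have hnext : ∀ l v, IsFinPath g.edges g.start l v → next l ∈ g.edges ∧ (next l).1 = v := by
    intro l v hl
    by_cases hv : g.evenOwn v
    · simpa only [next, hl.endpoint_eq, if_pos hv] using hstr l v hl hv
    · simpa only [next, hl.endpoint_eq, if_neg hv] using hm v ⟨l, hl⟩ hv
  obtain ⟨w, hw⟩ := exists_seq_eq_history next
  have hstep : ∀ k, w k ∈ g.edges ∧ (w k).1 = endpoint g.start ((List.range k).map w) ∧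
      IsFinPath g.edges g.start ((List.range k).map w)
        (endpoint g.start ((List.range k).map w)) := by
    intro k
    induction k with
    | zero => exact (hw 0 ▸ hnext [] g.start rfl).imp_right (⟨·, rfl⟩)
    | succ k ih =>
      obtain ⟨hmem, hsrc, hpath⟩ := ih
      have hpath' : IsFinPath g.edges g.start ((List.range (k + 1)).map w)
          (endpoint g.start ((List.range (k + 1)).map w)) := by
        rw [List.range_succ, List.map_append, List.map_singleton, endpoint_append_singleton]
        exact hpath.append_singleton hmem hsrc
      exact (hw (k + 1) ▸ hnext _ _ hpath').imp_right (⟨·, hpath'⟩)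
  have hend : ∀ k, endpoint g.start ((List.range k).map w) = (w k).1 := fun k => (hstep k).2.1.symm
  refine ⟨w, ⟨(hstep 0).2.1, fun k => ⟨(hstep k).1, ?_⟩⟩, fun k hk => ?_, fun k hk => ?_⟩
  · rw [← hend (k + 1), List.range_succ, List.map_append, List.map_singleton,
      endpoint_append_singleton]
  · rw [hw k]
    simp only [next, hend k, if_pos hk]
  · conv_lhs => rw [hw k]
    simp only [next, hend k, if_neg hk]

theorem evenWins_of_positional (m : V → V × ℕ × V)
    (hm : ∀ v, g.Reachable v → g.evenOwn v → m v ∈ g.edges ∧ (m v).1 = v)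
    (hwin : ∀ w, g.IsPlay w → (∀ k, g.evenOwn (w k).1 → w k = m (w k).1) →
      MaxInfOftEven fun k => (w k).2.1) : EvenWins g :=
  ⟨fun l => m (endpoint g.start l), fun l v hl hv => hl.endpoint_eq ▸ hm v ⟨l, hl⟩ hv,
    fun w hw hcons => hwin w hw fun k hk => (hcons k hk).trans (congrArg m (hw.endpoint_prefix k))⟩

end PGame

namespace GameGraph

variable {n d : ℕ} {G : GameGraph n d}

theorem mem_Icc_of_reachable {v : ℕ} (hv : G.toPGame.Reachable v) : v ∈ Set.Icc 1 n := by
  obtain ⟨l, hl⟩ := hv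
  rcases hl.eq_or_exists_edge with rfl | ⟨e, he, rfl⟩
  · exact G.start_mem
  · exact tgt_mem_Icc he

theorem exists_arisesO_limsupEven (hG : EvenWins G.toPGame) (τ : OPosStrat G) :
    ∃ w, ArisesO τ w ∧ LimsupEven w := by
  obtain ⟨str, hstr, hwin⟩ := hG
  obtain ⟨w, hw, hE, hO⟩ := G.toPGame.exists_play str hstr τ.choice fun v hv hne =>
    τ.mem v (mem_oddN_of_not_mem_evenN (mem_Icc_of_reachable hv) hne)
  exact ⟨w, ⟨hw, fun k hk => hO k (not_mem_evenN_of_mem_oddN hk)⟩, hwin w hw hE⟩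

end GameGraph

theorem EPosStrat.evenWins {n d : ℕ} {G : GameGraph n d} (τ : EPosStrat G)
    (hτ : EWinningPos τ) : EvenWins G.toPGame :=
  G.toPGame.evenWins_of_positional τ.choice (fun v _ hv => τ.mem v hv)
    fun w hw hcons => hτ w ⟨hw, hcons⟩

section Product

variable {n d : ℕ} {G : GameGraph n d} {Q : Type*} {A : Automaton Q}

abbrev ProdEdge (Q : Type*) : Type _ := ((ℕ ⊕ Letter) × Q) × ℕ × ((ℕ ⊕ Letter) × Q)

def moveEdge (e : Letter) (s : Q) : ProdEdge Q := ((Sum.inl e.1, s), 1, (Sum.inr e, s))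

def transEdge (t : Trans Q) : ProdEdge Q :=
  ((Sum.inr (tLetter t), tSrc t), tPrio t, (Sum.inl (tLetter t).2.2, tTgt t))

theorem moveEdge_inj {e e' : Letter} {s : Q} (h : moveEdge e s = moveEdge e' s) : e = e' := by
  simp only [moveEdge, Prod.mk.injEq, Sum.inr.injEq] at h
  exact h.2.2.1

theorem transEdge_injective : Function.Injective (transEdge (Q := Q)) := by
  intro t t' h
  simp only [transEdge, Prod.mk.injEq, Sum.inr.injEq] at h
  obtain ⟨⟨hl, hs⟩, hp, -, htg⟩ := h
  exact Prod.ext hs (Prod.ext hl (Prod.ext hp htg))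

theorem eq_moveEdge_of_mem {x : ProdEdge Q} (hx : x ∈ (prodGame G A).edges) {v : ℕ} {s : Q}
    (h : x.1 = (Sum.inl v, s)) : ∃ e ∈ G.edges, e.1 = v ∧ x = moveEdge e s := by
  rcases hx with ⟨e, he, s', rfl⟩ | ⟨t, -, -, rfl⟩
  · simp only [Prod.mk.injEq, Sum.inl.injEq] at h
    obtain ⟨rfl, rfl⟩ := h
    exact ⟨e, he, rfl, rfl⟩
  · simp at h

theorem eq_transEdge_of_mem {x : ProdEdge Q} (hx : x ∈ (prodGame G A).edges) {e : Letter} {s : Q}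
    (h : x.1 = (Sum.inr e, s)) :
    ∃ t ∈ A.trans, tLetter t = e ∧ tSrc t = s ∧ e ∈ G.edges ∧ x = transEdge t := by
  rcases hx with ⟨e', -, s', rfl⟩ | ⟨t, ht, he, rfl⟩
  · simp at h
  · simp only [Prod.mk.injEq, Sum.inr.injEq] at h
    obtain ⟨rfl, rfl⟩ := h
    exact ⟨t, ht, rfl, rfl, he, rfl⟩

def Interleaves (W : ℕ → ProdEdge Q) (ρ : ℕ → Trans Q) : Prop :=
  ∀ k, W (2 * k) = moveEdge (tLetter (ρ k)) (tSrc (ρ k)) ∧ W (2 * k + 1) = transEdge (ρ k)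

theorem exists_run_of_isPlay {W : ℕ → ProdEdge Q} (hW : (prodGame G A).IsPlay W) :
    ∃ ρ : ℕ → Trans Q, IsRun A ρ ∧ IsPlay G (fun k => tLetter (ρ k)) ∧ Interleaves W ρ := by
  have hstep : ∀ k v s, (W (2 * k)).1 = (Sum.inl v, s) → ∃ t ∈ A.trans, tLetter t ∈ G.edges ∧
      W (2 * k) = moveEdge (tLetter t) (tSrc t) ∧ W (2 * k + 1) = transEdge t := by
    intro k v s hsrc
    obtain ⟨e, -, -, he⟩ := eq_moveEdge_of_mem (hW.2 (2 * k)).1 hsrc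
    obtain ⟨t, ht, rfl, rfl, hte, ht'⟩ :=
      eq_transEdge_of_mem (hW.2 (2 * k + 1)).1 (by rw [← (hW.2 (2 * k)).2, he]; rfl)
    exact ⟨t, ht, hte, he, ht'⟩
  have hsrc : ∀ k, ∃ v s, (W (2 * k)).1 = (Sum.inl v, s) := by
    intro k
    induction k with
    | zero => exact ⟨_, _, hW.1⟩
    | succ k ih =>
      obtain ⟨v, s, hvs⟩ := ih
      obtain ⟨t, -, -, -, ht⟩ := hstep k v s hvs
      exact ⟨_, _, by rw [show 2 * (k + 1) = 2 * k + 1 + 1 by ring, ← (hW.2 _).2, ht]; rfl⟩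
  choose ρ hρ hρG hmove htrans using fun k =>
    hstep k (hsrc k).choose (hsrc k).choose_spec.choose (hsrc k).choose_spec.choose_spec
  have hlink : ∀ k, (tLetter (ρ k)).2.2 = (tLetter (ρ (k + 1))).1 ∧
      tTgt (ρ k) = tSrc (ρ (k + 1)) := by
    intro k
    have h := (hW.2 (2 * k + 1)).2
    rw [htrans k, show 2 * k + 1 + 1 = 2 * (k + 1) by ring, hmove (k + 1)] at h
    simpa [transEdge, moveEdge] using h
  have h0 := hW.1
  rw [show (0 : ℕ) = 2 * 0 from rfl, hmove 0] at h0
  simp only [moveEdge, prodGame, Prod.mk.injEq, Sum.inl.injEq] at h0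
  exact ⟨ρ, ⟨h0.2, fun k => ⟨hρ k, (hlink k).2⟩⟩, ⟨h0.1, fun k => ⟨hρG k, (hlink k).1⟩⟩,
    fun k => ⟨hmove k, htrans k⟩⟩

theorem maxInfOftEven_prodGame_iff (hprio : ∀ t ∈ A.trans, 1 ≤ tPrio t) {W : ℕ → ProdEdge Q}
    {ρ : ℕ → Trans Q} (hρ : IsRun A ρ) (hW : Interleaves W ρ) :
    (MaxInfOftEven fun j => (W j).2.1) ↔ Accepting ρ :=
  maxInfOftEven_interleave_one_iff (fun k => by rw [(hW k).1]; rfl)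
    (fun k => by rw [(hW k).2]; rfl) fun k => hprio _ (hρ.2 k).1

theorem eq_followRun {σ : TransStrat n d A} {w : Word} {ρ : ℕ → Trans Q}
    (hρ : IsRun A ρ) (hσ : ∀ k, ρ k = σ.app ((List.range k).map w) (tSrc (ρ k)) (w k)) :
    ρ = followRun A σ w := by
  have hstate : ∀ k, tSrc (ρ k) = stateAt A σ w k := by
    intro k
    induction k with
    | zero => exact hρ.1
    | succ k ih => rw [← (hρ.2 k).2, hσ k, ih]; rfl
  funext k
  rw [hσ k, hstate k]
  rfl

theorem mem_edges_of_reachable_inr {e : Letter} {s : Q}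
    (h : (prodGame G A).Reachable (Sum.inr e, s)) : e ∈ G.edges := by
  obtain ⟨l, hl⟩ := h
  rcases hl.eq_or_exists_edge with h | ⟨x, hx, hxe⟩
  · simp [prodGame] at h
  · rcases hx with ⟨e', he', s', rfl⟩ | ⟨t, -, -, rfl⟩
    · simp only [Prod.mk.injEq, Sum.inr.injEq] at hxe
      exact hxe.1 ▸ he'
    · simp at hxe

theorem mem_Icc_of_reachable_inl {v : ℕ} {s : Q}
    (h : (prodGame G A).Reachable (Sum.inl v, s)) : v ∈ Set.Icc 1 n := by
  obtain ⟨l, hl⟩ := h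
  rcases hl.eq_or_exists_edge with h | ⟨x, hx, hxv⟩
  · simp only [prodGame, Prod.mk.injEq, Sum.inl.injEq] at h
    exact h.1 ▸ G.start_mem
  · rcases hx with ⟨e', -, s', rfl⟩ | ⟨t, -, ht, rfl⟩
    · simp at hxv
    · simp only [Prod.mk.injEq, Sum.inl.injEq] at hxv
      exact hxv.1 ▸ GameGraph.tgt_mem_Icc ht

/-- The `inr` vertices left along a path of `G × A` are the letters read so far. -/
def wordOf (L : List (ProdEdge Q)) : List Letter := L.filterMap fun x => x.1.1.getRight?

theorem wordOf_prefix {W : ℕ → ProdEdge Q} {ρ : ℕ → Trans Q} (hW : Interleaves W ρ) (k : ℕ) :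
    wordOf ((List.range (2 * k + 1)).map W) = (List.range k).map fun j => tLetter (ρ j) := by
  have heven : ∀ k,
      wordOf ((List.range (2 * k)).map W) = (List.range k).map fun j => tLetter (ρ j) := by
    intro k
    induction k with
    | zero => rfl
    | succ k ih =>
      rw [show 2 * (k + 1) = 2 * k + 1 + 1 by ring]
      simp only [List.range_succ, List.map_append, wordOf, List.filterMap_append] at ih ⊢
      simp [ih, (hW k).1, (hW k).2, moveEdge, transEdge]
  rw [List.range_succ, List.map_append, List.map_singleton, wordOf, List.filterMap_append,
    ← wordOf, heven, (hW k).1]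
  simp [moveEdge]

def prodStrategy (τ : EPosStrat G) (σ : TransStrat n d A) (L : List (ProdEdge Q)) : ProdEdge Q :=
  match endpoint (prodGame G A).start L with
  | (Sum.inl v, s) => moveEdge (τ.choice v) s
  | (Sum.inr e, s) => transEdge (σ.app (wordOf L) s e)

theorem evenWins_prodGame (hprio : ∀ t ∈ A.trans, 1 ≤ tPrio t) (τ : EPosStrat G)
    (σ : TransStrat n d A) (hσ : WinningFor A σ {w | ArisesE τ w}) :
    EvenWins (prodGame G A) := by
  refine ⟨prodStrategy τ σ, fun L x hL hx => ?_, fun W hW hcons => ?_⟩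
  · rw [prodStrategy, hL.endpoint_eq]
    obtain ⟨v | e, s⟩ := x
    · obtain ⟨he, hv⟩ := τ.mem v hx
      exact ⟨Or.inl ⟨_, he, s, rfl⟩, by simp [moveEdge, hv]⟩
    · have he := mem_edges_of_reachable_inr ⟨L, hL⟩
      obtain ⟨ht, hsrc, hlet⟩ := σ.valid (wordOf L) s e (G.edges_alph e he)
      exact ⟨Or.inr ⟨_, ht, by rw [hlet]; exact he, rfl⟩, by simp [transEdge, hsrc, hlet]⟩
  obtain ⟨ρ, hρ, hplay, hshape⟩ := exists_run_of_isPlay hW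
  have harise : ArisesE τ fun k => tLetter (ρ k) := by
    refine ⟨hplay, fun k hk => ?_⟩
    have h := hcons (2 * k) (by rw [(hshape k).1]; exact hk)
    rw [prodStrategy, hW.endpoint_prefix, (hshape k).1] at h
    exact moveEdge_inj h
  have hfollow : ρ = followRun A σ fun k => tLetter (ρ k) := by
    refine eq_followRun hρ fun k => transEdge_injective ?_
    have h := hcons (2 * k + 1) (by rw [(hshape k).2]; trivial)
    rwa [prodStrategy, hW.endpoint_prefix, (hshape k).2, wordOf_prefix hshape] at h
  exact (maxInfOftEven_prodGame_iff hprio hρ hshape).mpr (hfollow ▸ hσ _ harise)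

theorem exists_arisesO_mem_lang (hprio : ∀ t ∈ A.trans, 1 ≤ tPrio t)
    (hP : EvenWins (prodGame G A)) (τ : OPosStrat G) : ∃ w, ArisesO τ w ∧ w ∈ Lang A := by
  obtain ⟨str, hstr, hwin⟩ := hP
  let m : (ℕ ⊕ Letter) × Q → ProdEdge Q := fun x => moveEdge (τ.choice (x.1.elim id Prod.fst)) x.2
  have hm : ∀ x, (prodGame G A).Reachable x → ¬ (prodGame G A).evenOwn x →
      m x ∈ (prodGame G A).edges ∧ (m x).1 = x := by
    rintro ⟨v | e, s⟩ hx hne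
    · obtain ⟨he, hv⟩ := τ.mem v
        (GameGraph.mem_oddN_of_not_mem_evenN (mem_Icc_of_reachable_inl hx) hne)
      exact ⟨Or.inl ⟨_, he, s, rfl⟩, by simp [m, moveEdge, hv]⟩
    · exact absurd trivial hne
  obtain ⟨W, hW, hE, hO⟩ := (prodGame G A).exists_play str hstr m hm
  obtain ⟨ρ, hρ, hplay, hshape⟩ := exists_run_of_isPlay hW
  refine ⟨fun k => tLetter (ρ k), ⟨hplay, fun k hk => ?_⟩, ρ, hρ, fun k => rfl,
    (maxInfOftEven_prodGame_iff hprio hρ hshape).mp (hwin W hW hE)⟩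
  have h := hO (2 * k) (by rw [(hshape k).1]; exact GameGraph.not_mem_evenN_of_mem_oddN hk)
  rw [(hshape k).1] at h
  exact moveEdge_inj h

end Product

theorem sfpg_product_equiv_general (n d : ℕ) (G : GameGraph n d) {Q : Type} (A : Automaton Q) (d' : ℕ)
    (hA : IsParityAutomaton n d d' A) (hSFPG : SFPG n d A) :
    EvenWins G.toPGame ↔ EvenWins (prodGame G A) := by
  have hprio : ∀ t ∈ A.trans, 1 ≤ tPrio t := fun t ht => (hA.1 t ht).2.1
  constructor
  · intro hG
    rcases G.positional_determinacy with ⟨τ, hτ⟩ | ⟨τ, hτ⟩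
    · obtain ⟨σ, hσ⟩ := hSFPG.2 G τ hτ
      exact evenWins_prodGame hprio τ σ hσ
    · obtain ⟨w, hw, hwin⟩ := GameGraph.exists_arisesO_limsupEven hG τ
      exact absurd hwin (hτ w hw)
  · intro hP
    rcases G.positional_determinacy with ⟨τ, hτ⟩ | ⟨τ, hτ⟩
    · exact τ.evenWins hτ
    · obtain ⟨w, hw, hL⟩ := exists_arisesO_mem_lang hprio hP τ
      exact absurd hL (hSFPG.1.2 w ⟨G, τ, hτ, hw⟩)

/-- If `G` is a game graph with `n` nodes and priorities up to `d`,
and `A` is an SFPG separator with input alphabet `Σ_{n,d}`, then Even has a winning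
strategy in `G` iff she has a winning strategy in the synchronized product `G × A`. -/
theorem sfpg_product_equiv (n d : ℕ) (hn : 1 ≤ n) (hd : 1 ≤ d)
    (G : GameGraph n d) {Q : Type} [Finite Q] (A : Automaton Q) (d' : ℕ)
    (hA : IsParityAutomaton n d d' A) (hSFPG : SFPG n d A) :
    EvenWins G.toPGame ↔ EvenWins (prodGame G A) :=
  sfpg_product_equiv_general n d G A d' hA hSFPG

end PGSep
end

section
/- For every positive integer n and every even positive integer d, the language of the automaton R_{n,d} equals LimsupEven_{n,d}: an infinite word over Σ_{n,d} has an accepting run of R_{n,d} if and only if the largest priority occurring infinitely often in the word is even. -/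
namespace PGSep

/-!
If the largest priority `p` occurring infinitely often is even, a run that resets register 1
at every occurrence of `p` once larger priorities have stopped occurring emits `2` at each of
these resets (register 1 then holds exactly `p`) and `1` everywhere else.

Conversely, let a run be accepting with largest recurring priority `2 r` while the largest
recurring letter priority `q` is odd. Eventually no transition has priority above `2 r` and no
letter priority above `q`; from then on the number of registers among the lowest `r` that hold
a value above `q` never increases. After each occurrence of `q`, register `r` holds at least `q`
until its next even reset, where it holds an even value, hence one above `q`; that reset
removes it, so this number drops infinitely often, which is impossible.
-/

open Filter

section InfOft

variable {f : ℕ → ℕ} {D p : ℕ}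

lemma infOft_iff_frequently : InfOft f p ↔ ∃ᶠ k in atTop, f k = p :=
  frequently_atTop.symm

lemma InfOft.le_of_forall_le (hb : ∀ k, f k ≤ D) (h : InfOft f p) : p ≤ D := by
  obtain ⟨k, -, rfl⟩ := h 0
  exact hb k

lemma exists_infOft_of_frequently_mem {S : Finset ℕ} (h : ∃ᶠ k in atTop, f k ∈ S) :
    ∃ q ∈ S, InfOft f q := by
  simp_rw [infOft_iff_frequently]
  exact S.frequently_exists.1 (h.mono fun k hk => ⟨f k, hk, rfl⟩)

lemma exists_max_infOft (hb : ∀ k, f k ≤ D) :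
    ∃ p, InfOft f p ∧ ∀ q, InfOft f q → q ≤ p := by
  classical
  obtain ⟨q, -, hq⟩ := exists_infOft_of_frequently_mem (S := Finset.range (D + 1))
    (Frequently.of_forall fun k => Finset.mem_range.2 (Nat.lt_succ_of_le (hb k)))
  exact ⟨Nat.findGreatest (InfOft f) D, Nat.findGreatest_spec (hq.le_of_forall_le hb) hq,
    fun q' hq' => Nat.le_findGreatest (hq'.le_of_forall_le hb) hq'⟩

lemma eventually_le_of_forall_infOft_le (hb : ∀ k, f k ≤ D)
    (hmax : ∀ q, InfOft f q → q ≤ p) : ∀ᶠ k in atTop, f k ≤ p := by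
  by_contra h
  obtain ⟨q, hq, hinf⟩ := exists_infOft_of_frequently_mem (S := Finset.Ioc p D)
    ((not_eventually.1 h).mono fun k hk => Finset.mem_Ioc.2 ⟨not_le.1 hk, hb k⟩)
  exact (Finset.mem_Ioc.1 hq).1.not_ge (hmax q hinf)

end InfOft

section Registers

lemma length_update (q : ℕ) : ∀ l : List ℕ, (update q l).length = l.length
  | [] => rfl
  | r :: l => by
    unfold update
    split
    · simp [length_update q l]
    · rfl

lemma mem_update {q x : ℕ} : ∀ {l : List ℕ}, x ∈ update q l → x = q ∨ x ∈ l
  | [], h => by simp [update] at h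
  | r :: l, h => by
    unfold update at h
    split at h
    · rcases List.mem_cons.1 h with rfl | h
      · exact Or.inl rfl
      · exact (mem_update h).imp_right (List.mem_cons_of_mem r)
    · exact Or.inr h

lemma le_of_mem_update {q x : ℕ} :
    ∀ {l : List ℕ}, l.Pairwise (· ≤ ·) → x ∈ update q l → q ≤ x
  | [], _, hx => by simp [update] at hx
  | r :: l, hl, hx => by
    rw [List.pairwise_cons] at hl
    unfold update at hx
    split at hx
    · rcases List.mem_cons.1 hx with rfl | hx
      · exact le_rfl
      · exact le_of_mem_update hl.2 hx
    · rcases List.mem_cons.1 hx with rfl | hx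
      · omega
      · exact (not_lt.1 ‹_›).trans (hl.1 x hx)

lemma pairwise_update (q : ℕ) :
    ∀ {l : List ℕ}, l.Pairwise (· ≤ ·) → (update q l).Pairwise (· ≤ ·)
  | [], h => h
  | r :: l, h => by
    unfold update
    split
    · exact List.pairwise_cons.2
        ⟨fun _ hb => le_of_mem_update (List.pairwise_cons.1 h).2 hb,
          pairwise_update q (List.pairwise_cons.1 h).2⟩
    · exact h

lemma getD_le_getD_update (q : ℕ) : ∀ (l : List ℕ) (i : ℕ), l.getD i 0 ≤ (update q l).getD i 0
  | [], _ => le_rfl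
  | r :: l, i => by
    unfold update
    split
    · cases i with
      | zero => simpa using le_of_lt ‹_›
      | succ i => simpa using getD_le_getD_update q l i
    · exact le_rfl

lemma regVal_le_regVal_update (q k : ℕ) (l : List ℕ) : regVal k l ≤ regVal k (update q l) :=
  getD_le_getD_update q l (k - 1)

lemma le_regVal_update {q k : ℕ} {l : List ℕ} (hl : l.Pairwise (· ≤ ·)) (hk : 1 ≤ k)
    (hkl : k ≤ l.length) : q ≤ regVal k (update q l) := by
  have hi : k - 1 < (update q l).length := by rw [length_update]; omega
  rw [regVal, List.getD_eq_getElem _ _ hi]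
  exact le_of_mem_update hl (List.getElem_mem hi)

lemma regVal_one_update (q : ℕ) {l : List ℕ} (hl : l ≠ []) :
    regVal 1 (update q l) = max (regVal 1 l) q := by
  obtain ⟨r, l, rfl⟩ := List.exists_cons_of_ne_nil hl
  unfold update regVal
  split <;> simp only [Nat.sub_self, List.getD_cons_zero] <;> omega

lemma getD_eraseIdx_of_le : ∀ (l : List ℕ) {i j : ℕ}, i ≤ j →
    (l.eraseIdx i).getD j 0 = l.getD (j + 1) 0
  | [], _, _, _ => by simp
  | _ :: _, 0, _, _ => by simp
  | _ :: l, i + 1, j + 1, h => by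
    simpa using getD_eraseIdx_of_le l (Nat.le_of_succ_le_succ h)

lemma regVal_resetReg_of_lt {k' k : ℕ} (l : List ℕ) (hk' : 1 ≤ k') (hlt : k' < k) :
    regVal k (resetReg k' l) = regVal k l := by
  obtain ⟨j, rfl⟩ : ∃ j, k = j + 2 := ⟨k - 2, by omega⟩
  simpa [regVal, resetReg] using getD_eraseIdx_of_le l (by omega : k' - 1 ≤ j)

lemma length_resetReg {k : ℕ} {l : List ℕ} (hk : 1 ≤ k) (hkl : k ≤ l.length) :
    (resetReg k l).length = l.length :=
  List.length_eraseIdx_add_one (by omega)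

lemma mem_resetReg {k x : ℕ} {l : List ℕ} (h : x ∈ resetReg k l) : x = 1 ∨ x ∈ l :=
  (List.mem_cons.1 h).imp_right fun h => (List.eraseIdx_sublist l (k - 1)).subset h

def numAbove (m P : ℕ) (l : List ℕ) : ℕ := (l.take m).countP (P < ·)

lemma numAbove_update {q P : ℕ} (hq : q ≤ P) :
    ∀ (m : ℕ) (l : List ℕ), numAbove m P (update q l) = numAbove m P l
  | _, [] => rfl
  | 0, _ :: _ => by simp [numAbove]
  | m + 1, r :: l => by
    have ih := numAbove_update hq m l
    unfold update
    split
    · simp only [numAbove, List.take_succ_cons, List.countP_cons] at ih ⊢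
      simp [ih, show ¬P < q by omega, show ¬P < r by omega]
    · rfl

lemma numAbove_resetReg_add {P : ℕ} (hP : 1 ≤ P) :
    ∀ {k m : ℕ} {l : List ℕ}, 1 ≤ k → k ≤ m → m ≤ l.length →
      numAbove m P (resetReg k l) + (if P < regVal k l then 1 else 0) = numAbove m P l
  | _, _, [], _, _, hm => by simp only [List.length_nil] at hm; omega
  | 1, m + 1, r :: l, _, _, _ => by
    simp only [numAbove, resetReg, regVal, Nat.sub_self, List.eraseIdx_cons_zero,
      List.getD_cons_zero, List.take_succ_cons, List.countP_cons, decide_eq_true_eq]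
    split_ifs <;> omega
  | k + 2, m + 1, r :: l, _, hkm, hm => by
    have ih := numAbove_resetReg_add hP (k := k + 1) (m := m) (l := l) (by omega) (by omega)
      (by simpa using hm)
    obtain ⟨m', rfl⟩ : ∃ m', m = m' + 1 := ⟨m - 1, by omega⟩
    simp only [numAbove, resetReg, regVal, Nat.add_one_sub_one,
      List.eraseIdx_cons_succ, List.getD_cons_succ, List.take_succ_cons, List.countP_cons,
      decide_eq_true_eq] at ih ⊢
    grind

end Registers

def IsRegState (m : ℕ) (s : List ℕ) : Prop :=
  s.length = m ∧ s.Pairwise (· ≤ ·) ∧ ∀ x ∈ s, 1 ≤ x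

lemma isRegState_replicate (m : ℕ) : IsRegState m (List.replicate m 1) :=
  ⟨List.length_replicate, List.pairwise_replicate.2 (Or.inr le_rfl),
    fun _ hx => (List.eq_of_mem_replicate hx).ge⟩

lemma IsRegState.update {m q : ℕ} {s : List ℕ} (hs : IsRegState m s) (hq : 1 ≤ q) :
    IsRegState m (update q s) :=
  ⟨(length_update q s).trans hs.1, pairwise_update q hs.2.1,
    fun x hx => (mem_update hx).elim (· ▸ hq) (hs.2.2 x)⟩

lemma IsRegState.resetReg {m k : ℕ} {s : List ℕ} (hs : IsRegState m s) (hk : 1 ≤ k)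
    (hkm : k ≤ m) : IsRegState m (resetReg k s) :=
  ⟨(length_resetReg hk (hs.1 ▸ hkm)).trans hs.1,
    List.pairwise_cons.2 ⟨fun x hx => hs.2.2 x ((List.eraseIdx_sublist s (k - 1)).subset hx),
      hs.2.1.sublist (List.eraseIdx_sublist s (k - 1))⟩,
    fun x hx => (mem_resetReg hx).elim (·.ge) (hs.2.2 x)⟩

section Raut

variable {n d : ℕ} {t : Trans (List ℕ)}

lemma Raut_trans_cases (ht : t ∈ (Raut n d).trans) :
    InAlph n d (tLetter t) ∧
      ((tPrio t = 1 ∧ tTgt t = update (prio (tLetter t)) (tSrc t)) ∨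
        ∃ k, 1 ≤ k ∧ k ≤ rn n ∧ tTgt t = resetReg k (update (prio (tLetter t)) (tSrc t)) ∧
          ((tPrio t = 2 * k ∧ Even (regVal k (update (prio (tLetter t)) (tSrc t)))) ∨
            tPrio t = 2 * k + 1)) := by
  obtain ⟨s, e, he, rfl | ⟨k, hk1, hkn, ⟨hev, rfl⟩ | ⟨-, rfl⟩⟩⟩ := ht
  · exact ⟨he, Or.inl ⟨rfl, rfl⟩⟩
  · exact ⟨he, Or.inr ⟨k, hk1, hkn, rfl, Or.inl ⟨rfl, hev⟩⟩⟩
  · exact ⟨he, Or.inr ⟨k, hk1, hkn, rfl, Or.inr rfl⟩⟩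

lemma Raut_tPrio_le (ht : t ∈ (Raut n d).trans) : tPrio t ≤ 2 * rn n + 1 := by
  rcases (Raut_trans_cases ht).2 with ⟨h, -⟩ | ⟨k, -, hkn, -, ⟨h, -⟩ | h⟩ <;> omega

lemma Raut_of_tPrio_eq_two_mul {r : ℕ} (ht : t ∈ (Raut n d).trans) (hr : tPrio t = 2 * r) :
    1 ≤ r ∧ r ≤ rn n ∧ tTgt t = resetReg r (update (prio (tLetter t)) (tSrc t)) ∧
      Even (regVal r (update (prio (tLetter t)) (tSrc t))) := by
  rcases (Raut_trans_cases ht).2 with ⟨h, -⟩ | ⟨k, hk1, hkn, htgt, ⟨h, hev⟩ | h⟩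
  · omega
  · obtain rfl : k = r := by omega
    exact ⟨hk1, hkn, htgt, hev⟩
  · omega

lemma Raut_isRegState_tTgt (ht : t ∈ (Raut n d).trans) (hs : IsRegState (rn n) (tSrc t)) :
    IsRegState (rn n) (tTgt t) := by
  obtain ⟨he, ⟨-, htgt⟩ | ⟨k, hk1, hkn, htgt, -⟩⟩ := Raut_trans_cases ht <;> rw [htgt]
  · exact hs.update he.2.2.1
  · exact (hs.update he.2.2.1).resetReg hk1 hkn

lemma Raut_regVal_tTgt_of_tPrio_lt {r : ℕ} (ht : t ∈ (Raut n d).trans)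
    (hlt : tPrio t < 2 * r) :
    regVal r (tTgt t) = regVal r (update (prio (tLetter t)) (tSrc t)) := by
  rcases (Raut_trans_cases ht).2 with ⟨-, htgt⟩ | ⟨k, hk1, -, htgt, ⟨h, -⟩ | h⟩ <;> rw [htgt]
  all_goals exact regVal_resetReg_of_lt _ hk1 (by omega)

lemma Raut_numAbove_tTgt_le {r P : ℕ} (ht : t ∈ (Raut n d).trans)
    (hlen : r ≤ (tSrc t).length) (hP : 1 ≤ P) (hq : prio (tLetter t) ≤ P)
    (hle : tPrio t ≤ 2 * r) : numAbove r P (tTgt t) ≤ numAbove r P (tSrc t) := by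
  rw [← numAbove_update hq r (tSrc t)]
  rcases (Raut_trans_cases ht).2 with ⟨-, htgt⟩ | ⟨k, hk1, -, htgt, ⟨h, -⟩ | h⟩ <;> rw [htgt]
  all_goals
    have := numAbove_resetReg_add hP hk1 (by omega : k ≤ r)
      (by rwa [length_update] : r ≤ (update (prio (tLetter t)) (tSrc t)).length)
    omega

lemma Raut_numAbove_tTgt_lt {r P : ℕ} (ht : t ∈ (Raut n d).trans)
    (hlen : r ≤ (tSrc t).length) (hP : 1 ≤ P) (hq : prio (tLetter t) ≤ P)
    (hr : tPrio t = 2 * r) (hbig : P < regVal r (update (prio (tLetter t)) (tSrc t))) :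
    numAbove r P (tTgt t) < numAbove r P (tSrc t) := by
  obtain ⟨hr1, -, htgt, -⟩ := Raut_of_tPrio_eq_two_mul ht hr
  have := numAbove_resetReg_add hP hr1 le_rfl
    (by rwa [length_update] : r ≤ (update (prio (tLetter t)) (tSrc t)).length)
  rw [htgt, ← numAbove_update hq r (tSrc t)]
  simp only [hbig, if_true] at this
  omega

end Raut

section Runs

variable {n d : ℕ} {ρ : ℕ → Trans (List ℕ)}

lemma IsRun.isRegState (hρ : IsRun (Raut n d) ρ) (t : ℕ) : IsRegState (rn n) (tSrc (ρ t)) := by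
  induction t with
  | zero => exact hρ.1 ▸ isRegState_replicate _
  | succ t ih => exact (hρ.2 t).2 ▸ Raut_isRegState_tTgt (hρ.2 t).1 ih

lemma IsRun.le_regVal_update_of_tPrio_lt {r q t₁ t : ℕ} (hρ : IsRun (Raut n d) ρ) (hr : 1 ≤ r)
    (hrn : r ≤ rn n) (hq : prio (tLetter (ρ t₁)) = q) (ht : t₁ ≤ t)
    (hbelow : ∀ t', t₁ ≤ t' → t' < t → tPrio (ρ t') < 2 * r) :
    q ≤ regVal r (update (prio (tLetter (ρ t))) (tSrc (ρ t))) := by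
  induction t, ht using Nat.le_induction with
  | base =>
    obtain ⟨hlen, hsorted, -⟩ := hρ.isRegState t₁
    exact hq ▸ le_regVal_update hsorted hr (hlen ▸ hrn)
  | succ t ht ih =>
    calc q ≤ regVal r (update (prio (tLetter (ρ t))) (tSrc (ρ t))) :=
          ih fun t' h₁ h₂ => hbelow t' h₁ (by omega)
      _ = regVal r (tSrc (ρ (t + 1))) := by
          rw [← (hρ.2 t).2, Raut_regVal_tTgt_of_tPrio_lt (hρ.2 t).1 (hbelow t ht (by omega))]
      _ ≤ _ := regVal_le_regVal_update _ _ _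

lemma IsRun.exists_numAbove_lt {r q M : ℕ} (hρ : IsRun (Raut n d) ρ) (hq : Odd q)
    (hqinf : InfOft (fun k => prio (tLetter (ρ k))) q)
    (hrinf : InfOft (fun k => tPrio (ρ k)) (2 * r))
    (hM : ∀ t, M ≤ t → tPrio (ρ t) ≤ 2 * r ∧ prio (tLetter (ρ t)) ≤ q) {T : ℕ} (hT : M ≤ T) :
    ∃ T', M ≤ T' ∧ numAbove r q (tSrc (ρ T')) < numAbove r q (tSrc (ρ T)) := by
  classical
  obtain ⟨t₁, ht₁, hqt₁⟩ := hqinf T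
  have hex : ∃ t, t₁ ≤ t ∧ tPrio (ρ t) = 2 * r := hrinf t₁
  obtain ⟨ht₁₂, ht₂⟩ := Nat.find_spec hex
  set t₂ := Nat.find hex
  obtain ⟨hr1, hrn, -, hev⟩ := Raut_of_tPrio_eq_two_mul (hρ.2 t₂).1 ht₂
  have hlen : r ≤ (tSrc (ρ t₂)).length := (hρ.isRegState t₂).1 ▸ hrn
  have hq1 : 1 ≤ q := hq.pos
  have hge : q ≤ regVal r (update (prio (tLetter (ρ t₂))) (tSrc (ρ t₂))) :=
    hρ.le_regVal_update_of_tPrio_lt hr1 hrn hqt₁ ht₁₂ fun t' h₁ h₂ =>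
      (hM t' (by omega)).1.lt_of_ne fun h => Nat.find_min hex h₂ ⟨h₁, h⟩
  have hbig : q < regVal r (update (prio (tLetter (ρ t₂))) (tSrc (ρ t₂))) :=
    hge.lt_of_ne fun h => Nat.not_even_iff_odd.2 hq (h ▸ hev)
  have hanti : ∀ t, M ≤ t → numAbove r q (tSrc (ρ (t + 1))) ≤ numAbove r q (tSrc (ρ t)) :=
    fun t ht => (hρ.2 t).2 ▸ Raut_numAbove_tTgt_le (hρ.2 t).1
      ((hρ.isRegState t).1 ▸ hrn) hq1 (hM t ht).2 (hM t ht).1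
  refine ⟨t₂ + 1, by omega, ?_⟩
  calc numAbove r q (tSrc (ρ (t₂ + 1)))
      < numAbove r q (tSrc (ρ t₂)) := (hρ.2 t₂).2 ▸
        Raut_numAbove_tTgt_lt (hρ.2 t₂).1 hlen hq1 (hM t₂ (by omega)).2 ht₂ hbig
    _ ≤ numAbove r q (tSrc (ρ T)) :=
        Nat.rel_of_forall_rel_succ_of_le_of_le (· ≥ ·)
          (f := fun t => numAbove r q (tSrc (ρ t))) hanti hT (ht₁.trans ht₁₂)

lemma IsRun.limsupEven_of_accepting {w : Word} (hρ : IsRun (Raut n d) ρ) (hread : Reads ρ w)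
    (hacc : Accepting ρ) : LimsupEven w := by
  have hword : (fun k => prio (w k)) = fun k => prio (tLetter (ρ k)) :=
    funext fun k => by rw [hread k]
  have hbound : ∀ k, prio (tLetter (ρ k)) ≤ d := fun k => (Raut_trans_cases (hρ.2 k).1).1.2.2.2.1
  obtain ⟨q, hqinf, hqmax⟩ := exists_max_infOft hbound
  rcases Nat.even_or_odd q with hq | hq
  · exact ⟨q, hq, hword ▸ hqinf, hword ▸ hqmax⟩
  obtain ⟨_, ⟨r, rfl⟩, hrinf, hrmax⟩ := hacc
  rw [← two_mul] at hrinf hrmax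
  obtain ⟨M, hM⟩ := eventually_atTop.1
    ((eventually_le_of_forall_infOft_le (fun k => Raut_tPrio_le (hρ.2 k).1) hrmax).and
      (eventually_le_of_forall_infOft_le hbound hqmax))
  have hmin := Function.argminOn_mem (fun t => numAbove r q (tSrc (ρ t))) (Set.Ici M)
    ⟨M, Set.mem_Ici.2 le_rfl⟩
  obtain ⟨T', hT', hlt⟩ := hρ.exists_numAbove_lt hq hqinf hrinf hM hmin
  exact (Function.not_lt_argminOn (fun t => numAbove r q (tSrc (ρ t))) (Set.Ici M) hT' hlt).elim

end Runs

section ResetOneRun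

variable (n : ℕ) (w : Word) (reset : ℕ → Prop) [DecidablePred reset]

def resetOneStates : ℕ → List ℕ
  | 0 => List.replicate (rn n) 1
  | t + 1 =>
    if reset t then resetReg 1 (update (prio (w t)) (resetOneStates t))
    else update (prio (w t)) (resetOneStates t)

def resetOneRun (t : ℕ) : Trans (List ℕ) :=
  (resetOneStates n w reset t, w t,
    if reset t then
      (if Even (regVal 1 (update (prio (w t)) (resetOneStates n w reset t))) then 2 else 3)
    else 1,
    resetOneStates n w reset (t + 1))

variable {n w reset}

lemma length_resetOneStates (t : ℕ) : (resetOneStates n w reset t).length = rn n := by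
  induction t with
  | zero => exact List.length_replicate
  | succ t ih =>
    rw [resetOneStates]
    split
    · rw [length_resetReg le_rfl (by rw [length_update, ih]; unfold rn; omega),
        length_update, ih]
    · rw [length_update, ih]

lemma resetOneStates_ne_nil (t : ℕ) : resetOneStates n w reset t ≠ [] :=
  List.ne_nil_of_length_pos (by rw [length_resetOneStates]; unfold rn; omega)

lemma isRun_resetOneRun {d : ℕ} (hw : ∀ k, InAlph n d (w k)) :
    IsRun (Raut n d) (resetOneRun n w reset) := by
  refine ⟨rfl, fun t => ⟨⟨resetOneStates n w reset t, w t, hw t, ?_⟩, rfl⟩⟩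
  simp only [resetOneRun, resetOneStates]
  by_cases ht : reset t
  · refine Or.inr ⟨1, le_rfl, by unfold rn; omega, ?_⟩
    by_cases hev : Even (regVal 1 (update (prio (w t)) (resetOneStates n w reset t)))
    · simp [ht, hev]
    · simp [ht, hev, Nat.not_even_iff_odd.1 hev]
  · simp [ht]

lemma regVal_one_resetOneStates_le {p t₀ : ℕ} (hp : 1 ≤ p) (ht₀ : reset t₀)
    (hle : ∀ t, t₀ ≤ t → prio (w t) ≤ p) {t : ℕ} (ht : t₀ < t) :
    regVal 1 (resetOneStates n w reset t) ≤ p := by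
  induction t, ht using Nat.le_induction with
  | base => simp [resetOneStates, ht₀, resetReg, regVal, hp]
  | succ t ht ih =>
    rw [resetOneStates]
    split
    · simp [resetReg, regVal, hp]
    · rw [regVal_one_update _ (resetOneStates_ne_nil t)]
      exact max_le ih (hle t (by omega))

end ResetOneRun

lemma mem_lang_Raut_of_limsupEven {n d : ℕ} {w : Word} (hw : ∀ k, InAlph n d (w k))
    (hw_even : LimsupEven w) : w ∈ Lang (Raut n d) := by
  classical
  obtain ⟨p, hpe, hpinf, hpmax⟩ := hw_even
  obtain ⟨N, hN⟩ := eventually_atTop.1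
    (eventually_le_of_forall_infOft_le (fun k => (hw k).2.2.2.1) hpmax)
  have hp : 1 ≤ p := by
    obtain ⟨k, -, hk⟩ := hpinf 0
    exact hk ▸ (hw k).2.2.1
  set reset : ℕ → Prop := fun t => N ≤ t ∧ prio (w t) = p
  obtain ⟨t₀, ht₀N, ht₀⟩ := hpinf N
  have hprio : ∀ t, t₀ < t → tPrio (resetOneRun n w reset t) = if reset t then 2 else 1 := by
    intro t ht
    by_cases hrt : reset t
    · have hval : regVal 1 (update (prio (w t)) (resetOneStates n w reset t)) = p := by
        rw [regVal_one_update _ (resetOneStates_ne_nil t), hrt.2]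
        exact max_eq_right (regVal_one_resetOneStates_le hp ⟨ht₀N, ht₀⟩
          (fun t' ht' => hN t' (by omega)) ht)
      simp [tPrio, resetOneRun, hrt, hval, hpe]
    · simp [tPrio, resetOneRun, hrt]
  refine ⟨resetOneRun n w reset, isRun_resetOneRun hw, fun _ => rfl, 2, even_two, fun T => ?_, fun q hq => ?_⟩
  · obtain ⟨t, ht, htp⟩ := hpinf (max T (max N (t₀ + 1)))
    have hrt : reset t := ⟨by omega, htp⟩
    exact ⟨t, by omega, by simpa [hrt] using hprio t (by omega)⟩
  · obtain ⟨t, ht, rfl⟩ := hq (t₀ + 1)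
    simp only [hprio t (by omega)]
    split <;> omega

theorem Raut_lang_eq_limsupEven_general (n d : ℕ)
    (w : Word) (hw : ∀ k, InAlph n d (w k)) :
    w ∈ Lang (Raut n d) ↔ LimsupEven w :=
  ⟨fun ⟨_, hρ, hread, hacc⟩ => hρ.limsupEven_of_accepting hread hacc,
    mem_lang_Raut_of_limsupEven hw⟩

/-- The language of `R_{n,d}` equals `LimsupEven_{n,d}`: a word over
`Σ_{n,d}` is accepted by `R_{n,d}` iff the largest priority occurring infinitely
often in it is even. -/
theorem Raut_lang_eq_limsupEven (n d : ℕ) (hn : 1 ≤ n) (hd : 0 < d) (hde : Even d)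
    (w : Word) (hw : ∀ k, InAlph n d (w k)) :
    w ∈ Lang (Raut n d) ↔ LimsupEven w :=
  Raut_lang_eq_limsupEven_general n d w hw

end PGSep
end
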